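/- arXiv:2605.07200 — 8 statements merged into one kernel-verified Lean document; each statement's English description precedes it below -/
import Mathlib

section
/- Quantitative Karamata–Hardy–Littlewood Tauberian theorem. Fix ε ∈ (0,1) and σ ∈ (0,1). There exists a constant C₁ > 1, depending only on ε and σ, with the following property. Let λ₁ > 0, L > 0, and let ν : ℝ → ℝ be a nondecreasing nonnegative function vanishing on (−∞,0] such that: (i) for all t ∈ (0, λ₁⁻¹], ∫ e^{−tr} dν(r) ≤ L·ν(t⁻¹); and (ii) for every τ with |τ−1| < σ and every s ≥ λ₁, |ν(τs) − ν(s)| ≤ ε·ν(s). Let μ : ℝ → ℝ be any nondecreasing nonnegative function vanishing on (−∞,0] and let β : [0,∞) → [0,∞) be any nondecreasing function such that |∫ e^{−tr} dμ(r) − ∫ e^{−tr} dν(r)| ≤ β(t)·∫ e^{−tr} dν(r) for all t ∈ (0, λ₁⁻¹]. Then for all s ≥ C₁λ₁, |μ(s) − ν(s)| ≤ (ε + εL + C₁·L·β(C₁·s⁻¹))·ν(s). -/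
open MeasureTheory Set Filter Polynomial

namespace KHLaux

variable {ω : ℝ → ℝ}

lemma sf_eq_zero_of_neg (hω : Monotone ω) (h0 : ∀ r ≤ 0, ω r = 0) {x : ℝ} (hx : x < 0) :
    hω.stieltjesFunction x = 0 := by
  rw [hω.stieltjesFunction_eq]
  refine le_antisymm ?_ ?_
  · have h := hω.rightLim_le (show x < x / 2 by linarith)
    rwa [h0 (x / 2) (by linarith)] at h
  · have h := hω.le_rightLim (le_refl x)
    rwa [h0 x hx.le] at h

lemma sf_tendsto_atBot (hω : Monotone ω) (h0 : ∀ r ≤ 0, ω r = 0) :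
    Tendsto hω.stieltjesFunction atBot (nhds 0) := by
  apply Tendsto.congr' _ (tendsto_const_nhds (α := ℝ) (f := atBot))
  filter_upwards [eventually_lt_atBot (0 : ℝ)] with x hx
  exact (sf_eq_zero_of_neg hω h0 hx).symm

lemma sf_measure_Iic (hω : Monotone ω) (h0 : ∀ r ≤ 0, ω r = 0) (x : ℝ) :
    hω.stieltjesFunction.measure (Iic x) = ENNReal.ofReal (hω.stieltjesFunction x) := by
  rw [StieltjesFunction.measure_Iic _ (sf_tendsto_atBot hω h0), sub_zero]

lemma sf_measure_neg (hω : Monotone ω) (h0 : ∀ r ≤ 0, ω r = 0) :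
    hω.stieltjesFunction.measure (Iio 0) = 0 := by
  have hU : Iio (0 : ℝ) = ⋃ n : ℕ, Iic (-(1 : ℝ) / (n + 1)) := by
    ext x
    simp only [mem_Iio, mem_iUnion, mem_Iic]
    constructor
    · intro hx
      obtain ⟨n, hn⟩ := exists_nat_one_div_lt (show (0:ℝ) < -x by linarith)
      exact ⟨n, by rw [neg_div]; linarith⟩
    · rintro ⟨n, hn⟩
      have : -(1 : ℝ) / (n + 1) < 0 := by
        apply div_neg_of_neg_of_pos <;> [norm_num; positivity]
      linarith
  refine le_antisymm ?_ (zero_le)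
  rw [hU]
  refine le_trans (measure_iUnion_le _) ?_
  have : ∀ n : ℕ, hω.stieltjesFunction.measure (Iic (-(1 : ℝ) / (n + 1))) = 0 := by
    intro n
    rw [sf_measure_Iic hω h0, sf_eq_zero_of_neg hω h0
      (show -(1:ℝ)/(n+1) < 0 by apply div_neg_of_neg_of_pos <;> [norm_num; positivity])]
    simp
  simp [this]

lemma sf_ae_nonneg (hω : Monotone ω) (h0 : ∀ r ≤ 0, ω r = 0) :
    ∀ᵐ r ∂hω.stieltjesFunction.measure, (0 : ℝ) ≤ r := by
  rw [ae_iff]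
  have : {r : ℝ | ¬ (0 : ℝ) ≤ r} = Iio 0 := by ext r; simp [not_le]
  rw [this]
  exact sf_measure_neg hω h0

lemma sf_measure_Iio_le (hω : Monotone ω) (h0 : ∀ r ≤ 0, ω r = 0) (x : ℝ) :
    hω.stieltjesFunction.measure (Iio x) ≤ ENNReal.ofReal (ω x) := by
  have hU : Iio x = ⋃ n : ℕ, Iic (x - 1 / (n + 1)) := by
    ext y
    simp only [mem_Iio, mem_iUnion, mem_Iic]
    constructor
    · intro hy
      obtain ⟨n, hn⟩ := exists_nat_one_div_lt (show (0:ℝ) < x - y by linarith)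
      exact ⟨n, by linarith⟩
    · rintro ⟨n, hn⟩
      have : (0:ℝ) < 1 / (n + 1) := by positivity
      linarith
  rw [hU, Monotone.measure_iUnion]
  · refine iSup_le fun n => ?_
    rw [sf_measure_Iic hω h0]
    refine ENNReal.ofReal_le_ofReal ?_
    rw [hω.stieltjesFunction_eq]
    exact hω.rightLim_le (show x - 1 / (n + 1) < x by
      have : (0:ℝ) < 1 / (n + 1) := by positivity
      linarith)
  · intro m n hmn
    refine Iic_subset_Iic.2 (sub_le_sub (le_refl x) ?_)
    refine one_div_le_one_div_of_le (by positivity) ?_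
    have : (m:ℝ) ≤ (n:ℝ) := Nat.cast_le.2 hmn
    linarith


lemma integrable_exp_of_lintegral_ne_top {m : Measure ℝ} {u : ℝ}
    (h : (∫⁻ r, ENNReal.ofReal (Real.exp (-u * r)) ∂m) ≠ ⊤) :
    Integrable (fun r => Real.exp (-u * r)) m := by
  refine ⟨(Real.continuous_exp.comp (continuous_const.mul continuous_id)).aestronglyMeasurable, ?_⟩
  rw [hasFiniteIntegral_iff_ofReal (Eventually.of_forall fun r => (Real.exp_pos _).le)]
  exact lt_top_iff_ne_top.2 h

/-- ramp-over-x function: continuous, `= 0` for `x ≤ c`, `x * f x = 1` for `x ≥ d`,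
`x * f x ≤ 1` for `x ≥ 0`. -/
noncomputable def ramp (c d : ℝ) : ℝ → ℝ :=
  fun x => (max 0 (min 1 ((x - c) / (d - c)))) / max x c

variable {c d : ℝ}

lemma ramp_continuous (hc : 0 < c) : Continuous (ramp c d) := by
  apply Continuous.div
  · exact (continuous_const.max ((continuous_const.min
      ((continuous_id.sub continuous_const).div_const _))))
  · exact continuous_id.max continuous_const
  · intro x
    have : 0 < max x c := lt_of_lt_of_le hc (le_max_right _ _)
    exact this.ne'

lemma ramp_nonneg (hc : 0 < c) (x : ℝ) : 0 ≤ ramp c d x := by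
  apply div_nonneg (le_max_left _ _)
  exact le_of_lt (lt_of_lt_of_le hc (le_max_right _ _))

lemma ramp_eq_zero (hc : c < d) {x : ℝ} (hx : x ≤ c) : ramp c d x = 0 := by
  unfold ramp
  have h1 : (x - c) / (d - c) ≤ 0 :=
    div_nonpos_of_nonpos_of_nonneg (by linarith) (by linarith)
  have h2 : min 1 ((x - c) / (d - c)) ≤ 0 := le_trans (min_le_right _ _) h1
  rw [max_eq_left h2, zero_div]

lemma ramp_mul_eq_one (hc : 0 < c) (hcd : c < d) {x : ℝ} (hx : d ≤ x) :
    x * ramp c d x = 1 := by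
  unfold ramp
  have hxc : c < x := lt_of_lt_of_le hcd hx
  have h1 : (1:ℝ) ≤ (x - c) / (d - c) := (le_div_iff₀ (by linarith)).2 (by linarith)
  rw [min_eq_left h1, max_eq_right zero_le_one, max_eq_left hxc.le]
  rw [mul_one_div]
  exact div_self (show (0:ℝ) < x by linarith).ne'

lemma ramp_mul_le_one (hc : 0 < c) {x : ℝ} (hx : 0 ≤ x) : x * ramp c d x ≤ 1 := by
  unfold ramp
  have hmax : 0 < max x c := lt_of_lt_of_le hc (le_max_right _ _)
  have h1 : max 0 (min 1 ((x - c) / (d - c))) ≤ 1 :=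
    max_le zero_le_one (min_le_left _ _)
  have h2 : x / max x c ≤ 1 := (div_le_one hmax).2 (le_max_left _ _)
  calc x * ((max 0 (min 1 ((x - c) / (d - c)))) / max x c)
      = (max 0 (min 1 ((x - c) / (d - c)))) * (x / max x c) := by ring
    _ ≤ 1 * 1 := by
        apply mul_le_mul h1 h2 (by positivity) zero_le_one
    _ = 1 := by norm_num

/-- nonnegative polynomial approximation of a nonnegative continuous function on `[0,1]`. -/
lemma exists_poly_approx_nonneg {f : ℝ → ℝ} (hf : Continuous f)
    (hf0 : ∀ x, 0 ≤ f x) {η : ℝ} (hη : 0 < η) :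
    ∃ q : ℝ[X], (∀ x ∈ Icc (0:ℝ) 1, |q.eval x - f x| ≤ η) ∧
      (∀ x ∈ Icc (0:ℝ) 1, 0 ≤ q.eval x) := by
  obtain ⟨z, hz, hzmax'⟩ := isCompact_Icc.exists_isMaxOn (nonempty_Icc.2 zero_le_one)
    (hf.continuousOn (s := Icc (0:ℝ) 1))
  have hzmax : ∀ x ∈ Icc (0:ℝ) 1, f x ≤ f z := fun x hx => hzmax' hx
  set M : ℝ := Real.sqrt (f z) with hM
  have hM0 : 0 ≤ M := Real.sqrt_nonneg _
  set τ : ℝ := min 1 (η / (1 + 2 * M)) with hτdef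
  have hτ : 0 < τ := lt_min one_pos (by positivity)
  obtain ⟨p, hp⟩ := exists_polynomial_near_of_continuousOn 0 1 (fun x => Real.sqrt (f x))
    ((Real.continuous_sqrt.comp hf).continuousOn) τ hτ
  refine ⟨p ^ 2, ?_, ?_⟩
  · intro x hx
    have hpx := (hp x hx).le
    have hfx : Real.sqrt (f x) ^ 2 = f x := Real.sq_sqrt (hf0 x)
    have hsx : Real.sqrt (f x) ≤ M := Real.sqrt_le_sqrt (hzmax x hx)
    have habs : |p.eval x| ≤ M + τ := by
      have h4 := abs_sub_abs_le_abs_sub (p.eval x) (Real.sqrt (f x))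
      have h2 : |Real.sqrt (f x)| = Real.sqrt (f x) := abs_of_nonneg (Real.sqrt_nonneg _)
      rw [h2] at h4
      linarith [h4.trans hpx]
    rw [eval_pow]
    have : p.eval x ^ 2 - f x = (p.eval x - Real.sqrt (f x)) * (p.eval x + Real.sqrt (f x)) := by
      linear_combination hfx
    rw [this, abs_mul]
    have h3 : |p.eval x + Real.sqrt (f x)| ≤ (M + τ) + M := by
      calc |p.eval x + Real.sqrt (f x)| ≤ |p.eval x| + |Real.sqrt (f x)| := abs_add_le _ _
        _ ≤ (M + τ) + M := by
            rw [abs_of_nonneg (Real.sqrt_nonneg _)]; exact add_le_add habs hsx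
    calc |p.eval x - Real.sqrt (f x)| * |p.eval x + Real.sqrt (f x)|
        ≤ τ * ((M + τ) + M) := by
          apply mul_le_mul hpx h3 (abs_nonneg _) hτ.le
      _ ≤ τ * (1 + 2 * M) := by
          have hτ1 : τ ≤ 1 := min_le_left _ _
          nlinarith
      _ ≤ η := by
          have : τ ≤ η / (1 + 2 * M) := min_le_right _ _
          rw [le_div_iff₀ (by positivity)] at this
          linarith [this]
  · intro x _
    rw [eval_pow]
    positivity



lemma exp_pow_eq (t r : ℝ) (k : ℕ) :
    Real.exp (-t * r) ^ (k + 1) = Real.exp (-(((k : ℝ) + 1) * t) * r) := by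
  rw [← Real.exp_nat_mul]
  congr 1
  push_cast
  ring

lemma poly_exp_repr (t : ℝ) (q : Polynomial ℝ) (r : ℝ) :
    Real.exp (-t * r) * q.eval (Real.exp (-t * r)) =
      ∑ k ∈ Finset.range (q.natDegree + 1),
        q.coeff k * Real.exp (-(((k : ℝ) + 1) * t) * r) := by
  conv_lhs => rw [Polynomial.eval_eq_sum_range, Finset.mul_sum]
  refine Finset.sum_congr rfl fun k _ => ?_
  rw [← exp_pow_eq]
  ring

lemma integrable_poly_exp {m : Measure ℝ} {t : ℝ} (q : Polynomial ℝ)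
    (hint : ∀ k ∈ Finset.range (q.natDegree + 1),
      Integrable (fun r => Real.exp (-(((k : ℝ) + 1) * t) * r)) m) :
    Integrable (fun r => Real.exp (-t * r) * q.eval (Real.exp (-t * r))) m := by
  have h : (fun r => Real.exp (-t * r) * q.eval (Real.exp (-t * r)))
      = fun r => ∑ k ∈ Finset.range (q.natDegree + 1),
          q.coeff k * Real.exp (-(((k : ℝ) + 1) * t) * r) := funext (poly_exp_repr t q)
  rw [h]
  exact integrable_finset_sum _ fun k hk => (hint k hk).const_mul _

lemma integral_poly_exp {m : Measure ℝ} {t : ℝ} (q : Polynomial ℝ)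
    (hint : ∀ k ∈ Finset.range (q.natDegree + 1),
      Integrable (fun r => Real.exp (-(((k : ℝ) + 1) * t) * r)) m) :
    ∫ r, Real.exp (-t * r) * q.eval (Real.exp (-t * r)) ∂m
      = ∑ k ∈ Finset.range (q.natDegree + 1),
          q.coeff k * ∫ r, Real.exp (-(((k : ℝ) + 1) * t) * r) ∂m := by
  simp_rw [poly_exp_repr t q]
  rw [integral_finset_sum _ (fun k hk => (hint k hk).const_mul _)]
  exact Finset.sum_congr rfl fun k _ => integral_const_mul _ _

lemma abs_sum_mul_le {s : Finset ℕ} (cf A B : ℕ → ℝ) (E : ℝ)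
    (h : ∀ k ∈ s, |A k - B k| ≤ E) :
    |∑ k ∈ s, cf k * A k - ∑ k ∈ s, cf k * B k| ≤ (∑ k ∈ s, |cf k|) * E := by
  rw [← Finset.sum_sub_distrib]
  refine (Finset.abs_sum_le_sum_abs _ _).trans ?_
  rw [Finset.sum_mul]
  refine Finset.sum_le_sum fun k hk => ?_
  rw [← mul_sub, abs_mul]
  exact mul_le_mul_of_nonneg_left (h k hk) (abs_nonneg _)

end KHLaux
open MeasureTheory Set

/-- The Laplace–Stieltjes transform of a nondecreasing function `ω` at `t`,
as a lower Lebesgue integral against the Lebesgue–Stieltjes measure of `ω`. -/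
noncomputable def laplaceStieltjes {ω : ℝ → ℝ} (hω : Monotone ω) (t : ℝ) : ENNReal :=
  ∫⁻ r, ENNReal.ofReal (Real.exp (-t * r)) ∂hω.stieltjesFunction.measure

set_option maxHeartbeats 2000000 in
open KHLaux Filter Polynomial in
/-- Quantitative Karamata–Hardy–Littlewood Tauberian theorem. -/
theorem quantitative_KHL (ε σ : ℝ) (hε : ε ∈ Set.Ioo (0:ℝ) 1) (hσ : σ ∈ Set.Ioo (0:ℝ) 1) :
    ∃ C₁ : ℝ, 1 < C₁ ∧
      ∀ (lam₁ L : ℝ), 0 < lam₁ → 0 < L →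
      ∀ (ν : ℝ → ℝ) (hν : Monotone ν),
        (∀ r, 0 ≤ ν r) → (∀ r ≤ 0, ν r = 0) →
        -- (i) exponential bound for the Laplace–Stieltjes transform of ν
        (∀ t ∈ Set.Ioc (0:ℝ) lam₁⁻¹,
          laplaceStieltjes hν t ≤ ENNReal.ofReal (L * ν t⁻¹)) →
        -- (ii) uniform near-multiplicative continuity of ν at scale ≥ lam₁
        (∀ τ s : ℝ, |τ - 1| < σ → lam₁ ≤ s → |ν (τ * s) - ν s| ≤ ε * ν s) →
      ∀ (μ : ℝ → ℝ) (hμ : Monotone μ),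
        (∀ r, 0 ≤ μ r) → (∀ r ≤ 0, μ r = 0) →
      ∀ (β : ℝ → ℝ), MonotoneOn β (Set.Ici 0) → (∀ x, 0 ≤ x → 0 ≤ β x) →
        -- |∫ e^{−tr} dμ(r) − ∫ e^{−tr} dν(r)| ≤ β(t) ∫ e^{−tr} dν(r),
        -- encoded by the two one-sided inequalities in the extended nonnegative reals
        (∀ t ∈ Set.Ioc (0:ℝ) lam₁⁻¹,
          laplaceStieltjes hμ t
              ≤ laplaceStieltjes hν t + ENNReal.ofReal (β t) * laplaceStieltjes hν t
          ∧ laplaceStieltjes hν t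
              ≤ laplaceStieltjes hμ t + ENNReal.ofReal (β t) * laplaceStieltjes hν t) →
      ∀ s : ℝ, C₁ * lam₁ ≤ s →
        |μ s - ν s| ≤ (ε + ε * L + C₁ * L * β (C₁ * s⁻¹)) * ν s := by
  obtain ⟨hε0, hε1⟩ := hε
  obtain ⟨hσ0, hσ1⟩ := hσ
  set η : ℝ := ε / 7 with hηdef
  have hη0 : 0 < η := by positivity
  have hη1 : η < 1 := by rw [hηdef]; linarith
  set δ : ℝ := σ / 2 with hδdef
  have hδ0 : 0 < δ := by positivity
  have hδ1 : δ < 1 / 2 := by rw [hδdef]; linarith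
  set A : ℝ := Real.exp (-(1 + δ)) with hAdef
  set b : ℝ := Real.exp (-1) with hbdef
  set b' : ℝ := Real.exp (-(1 - δ)) with hb'def
  have hA0 : 0 < A := Real.exp_pos _
  have hb0 : 0 < b := Real.exp_pos _
  have hAb : A < b := Real.exp_lt_exp.2 (by linarith)
  have hbb' : b < b' := Real.exp_lt_exp.2 (by linarith)
  have hb'1 : b' < 1 := Real.exp_lt_one_iff.2 (by linarith)
  -- upper approximating polynomial
  obtain ⟨p, hp⟩ := exists_polynomial_near_of_continuousOn 0 1 (ramp A b)
    ((ramp_continuous hA0).continuousOn) (η / 2) (by positivity)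
  set Q : ℝ[X] := p + Polynomial.C (η / 2) with hQdef
  have hQlb : ∀ x ∈ Icc (0:ℝ) 1, ramp A b x ≤ Q.eval x := by
    intro x hx
    have := (abs_lt.1 (hp x hx)).1
    simp only [hQdef, eval_add, eval_C]
    linarith
  have hQub : ∀ x ∈ Icc (0:ℝ) 1, Q.eval x ≤ ramp A b x + η := by
    intro x hx
    have := (abs_lt.1 (hp x hx)).2
    simp only [hQdef, eval_add, eval_C]
    linarith
  have hQ0 : ∀ x ∈ Icc (0:ℝ) 1, 0 ≤ Q.eval x :=
    fun x hx => le_trans (ramp_nonneg hA0 x) (hQlb x hx)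
  -- lower approximating polynomial
  obtain ⟨Q', hQ'c, hQ'0⟩ := exists_poly_approx_nonneg (f := ramp b b')
    (ramp_continuous hb0) (ramp_nonneg hb0) hη0
  set N : ℕ := Q.natDegree with hNdef
  set N' : ℕ := Q'.natDegree with hN'def
  set S : ℝ := ∑ k ∈ Finset.range (N + 1), |Q.coeff k| with hSdef
  set S' : ℝ := ∑ k ∈ Finset.range (N' + 1), |Q'.coeff k| with hS'def
  have hS0 : 0 ≤ S := Finset.sum_nonneg fun k _ => abs_nonneg _
  have hS'0 : 0 ≤ S' := Finset.sum_nonneg fun k _ => abs_nonneg _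
  have hN0 : (0:ℝ) ≤ (N:ℝ) := Nat.cast_nonneg _
  have hN'0 : (0:ℝ) ≤ (N':ℝ) := Nat.cast_nonneg _
  set C₁ : ℝ := (N : ℝ) + (N' : ℝ) + S + S' + 2 with hC₁def
  have hC₁ : 1 < C₁ := by rw [hC₁def]; linarith
  refine ⟨C₁, hC₁, ?_⟩
  intro lam₁ L hlam hL ν hν hν0 hνneg hi hii μ hμ hμ0 hμneg β hβmono hβnn hβ s hs
  have hC₁0 : 0 < C₁ := by linarith
  have hs0 : 0 < s := lt_of_lt_of_le (by positivity) hs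
  have hsl : lam₁ ≤ s := le_trans (le_mul_of_one_le_left hlam.le hC₁.le) hs
  set ρ : Measure ℝ := hν.stieltjesFunction.measure with hρdef
  set π : Measure ℝ := hμ.stieltjesFunction.measure with hπdef
  set t : ℝ := s⁻¹ with htdef
  have ht0 : 0 < t := by positivity
  have hts : t * s = 1 := inv_mul_cancel₀ hs0.ne'
  have htinv : t⁻¹ = s := inv_inv s
  set Iν : ℝ → ℝ := fun u => ∫ r, Real.exp (-u * r) ∂ρ with hIνdef
  set Iμ : ℝ → ℝ := fun u => ∫ r, Real.exp (-u * r) ∂π with hIμdef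
  have hIν0 : ∀ u, 0 ≤ Iν u := fun u => integral_nonneg fun r => (Real.exp_pos _).le
  have hIμ0 : ∀ u, 0 ≤ Iμ u := fun u => integral_nonneg fun r => (Real.exp_pos _).le
  have hνae : ∀ᵐ r ∂ρ, (0:ℝ) ≤ r := sf_ae_nonneg hν hνneg
  have hμae : ∀ᵐ r ∂π, (0:ℝ) ≤ r := sf_ae_nonneg hμ hμneg
  -- core conversion of the hypotheses to real-valued statements
  have key : ∀ u : ℝ, 0 < u → u ≤ lam₁⁻¹ →
      Integrable (fun r => Real.exp (-u * r)) ρ ∧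
      Integrable (fun r => Real.exp (-u * r)) π ∧
      Iν u ≤ L * ν u⁻¹ ∧
      |Iμ u - Iν u| ≤ β u * Iν u := by
    intro u hu0 hu1
    have h1 := hi u ⟨hu0, hu1⟩
    have h2 := hβ u ⟨hu0, hu1⟩
    simp only [laplaceStieltjes] at h1 h2
    rw [← hρdef] at h1
    rw [← hρdef, ← hπdef] at h2
    have hνfin : (∫⁻ r, ENNReal.ofReal (Real.exp (-u * r)) ∂ρ) ≠ ⊤ :=
      ne_top_of_le_ne_top ENNReal.ofReal_ne_top h1
    have hρint : Integrable (fun r => Real.exp (-u * r)) ρ :=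
      integrable_exp_of_lintegral_ne_top hνfin
    have hπfin : (∫⁻ r, ENNReal.ofReal (Real.exp (-u * r)) ∂π) ≠ ⊤ := by
      refine ne_top_of_le_ne_top ?_ h2.1
      exact ENNReal.add_ne_top.2 ⟨hνfin, ENNReal.mul_ne_top ENNReal.ofReal_ne_top hνfin⟩
    have hπint : Integrable (fun r => Real.exp (-u * r)) π :=
      integrable_exp_of_lintegral_ne_top hπfin
    have hνeq : ENNReal.ofReal (Iν u) = ∫⁻ r, ENNReal.ofReal (Real.exp (-u * r)) ∂ρ :=
      ofReal_integral_eq_lintegral_ofReal hρint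
        (Eventually.of_forall fun r => (Real.exp_pos _).le)
    have hμeq : ENNReal.ofReal (Iμ u) = ∫⁻ r, ENNReal.ofReal (Real.exp (-u * r)) ∂π :=
      ofReal_integral_eq_lintegral_ofReal hπint
        (Eventually.of_forall fun r => (Real.exp_pos _).le)
    refine ⟨hρint, hπint, ?_, ?_⟩
    · rw [← hνeq] at h1
      exact (ENNReal.ofReal_le_ofReal_iff (mul_nonneg hL.le (hν0 _))).1 h1
    · have hβu : 0 ≤ β u := hβnn u hu0.le
      have hco : ENNReal.ofReal (β u) * ENNReal.ofReal (Iν u)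
          = ENNReal.ofReal (β u * Iν u) := (ENNReal.ofReal_mul hβu).symm
      rw [← hνeq, ← hμeq, hco, ← ENNReal.ofReal_add (hIν0 u) (mul_nonneg hβu (hIν0 u)),
        ← ENNReal.ofReal_add (hIμ0 u) (mul_nonneg hβu (hIν0 u))] at h2
      have ha := (ENNReal.ofReal_le_ofReal_iff (by positivity)).1 h2.1
      have hb2 := (ENNReal.ofReal_le_ofReal_iff (by positivity)).1 h2.2
      rw [abs_sub_le_iff]
      constructor <;> linarith
  have ht1 : t ≤ lam₁⁻¹ := by
    rw [htdef, inv_eq_one_div, inv_eq_one_div, div_le_div_iff₀ hs0 hlam]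
    linarith
  obtain ⟨hρt, hπt, hIνt, hdifft⟩ := key t ht0 ht1
  have hIνts : Iν t ≤ L * ν s := by rwa [htinv] at hIνt
  -- integrability of the exponential family used by the polynomials
  have hukpos : ∀ k : ℕ, (0:ℝ) < ((k:ℝ) + 1) * t := fun k => by positivity
  have huk1 : ∀ k : ℕ, (k:ℝ) + 1 ≤ C₁ → ((k:ℝ) + 1) * t ≤ lam₁⁻¹ := by
    intro k hk
    rw [htdef, ← div_eq_mul_inv, inv_eq_one_div, div_le_div_iff₀ hs0 hlam]
    have h1 : ((k:ℝ) + 1) * lam₁ ≤ C₁ * lam₁ := mul_le_mul_of_nonneg_right hk hlam.le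
    linarith
  have hkC : ∀ {n : ℕ} (k : ℕ), k ∈ Finset.range (n + 1) → ((n:ℝ) + 1 ≤ C₁) → (k:ℝ) + 1 ≤ C₁ := by
    intro n k hk hn
    have : (k:ℝ) ≤ (n:ℝ) := Nat.cast_le.2 (Nat.lt_succ_iff.1 (Finset.mem_range.1 hk))
    linarith
  have hNC : (N:ℝ) + 1 ≤ C₁ := by rw [hC₁def]; linarith
  have hN'C : (N':ℝ) + 1 ≤ C₁ := by rw [hC₁def]; linarith
  have hintρQ : ∀ k ∈ Finset.range (N + 1),
      Integrable (fun r => Real.exp (-(((k:ℝ)+1) * t) * r)) ρ :=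
    fun k hk => (key _ (hukpos k) (huk1 k (hkC k hk hNC))).1
  have hintπQ : ∀ k ∈ Finset.range (N + 1),
      Integrable (fun r => Real.exp (-(((k:ℝ)+1) * t) * r)) π :=
    fun k hk => (key _ (hukpos k) (huk1 k (hkC k hk hNC))).2.1
  have hintρQ' : ∀ k ∈ Finset.range (N' + 1),
      Integrable (fun r => Real.exp (-(((k:ℝ)+1) * t) * r)) ρ :=
    fun k hk => (key _ (hukpos k) (huk1 k (hkC k hk hN'C))).1
  have hintπQ' : ∀ k ∈ Finset.range (N' + 1),
      Integrable (fun r => Real.exp (-(((k:ℝ)+1) * t) * r)) π :=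
    fun k hk => (key _ (hukpos k) (huk1 k (hkC k hk hN'C))).2.1
  set g : ℝ → ℝ := fun r => Real.exp (-t * r) * Q.eval (Real.exp (-t * r)) with hgdef
  set g' : ℝ → ℝ := fun r => Real.exp (-t * r) * Q'.eval (Real.exp (-t * r)) with hg'def
  have hgρ : Integrable g ρ := integrable_poly_exp Q hintρQ
  have hgπ : Integrable g π := integrable_poly_exp Q hintπQ
  have hg'ρ : Integrable g' ρ := integrable_poly_exp Q' hintρQ'
  have hg'π : Integrable g' π := integrable_poly_exp Q' hintπQ'
  have hxmem : ∀ r : ℝ, 0 ≤ r → Real.exp (-t * r) ∈ Icc (0:ℝ) 1 := by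
    intro r hr
    refine ⟨(Real.exp_pos _).le, ?_⟩
    have : 0 ≤ t * r := mul_nonneg ht0.le hr
    exact Real.exp_le_one_iff.2 (by linarith)
  have hg_ge_one : ∀ r ∈ Icc 0 s, 1 ≤ g r := by
    intro r hr
    have hx := hxmem r hr.1
    have hxb : b ≤ Real.exp (-t * r) := by
      rw [hbdef]
      apply Real.exp_le_exp.2
      have h1 : t * r ≤ t * s := mul_le_mul_of_nonneg_left hr.2 ht0.le
      rw [hts] at h1
      linarith
    calc (1:ℝ) = Real.exp (-t * r) * ramp A b (Real.exp (-t * r)) :=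
          (ramp_mul_eq_one hA0 hAb hxb).symm
      _ ≤ g r := mul_le_mul_of_nonneg_left (hQlb _ hx) (Real.exp_pos _).le
  have hg_le : ∀ r : ℝ, 0 ≤ r → g r ≤ 1 + η * Real.exp (-t * r) := by
    intro r hr
    have hx := hxmem r hr
    calc g r ≤ Real.exp (-t * r) * (ramp A b (Real.exp (-t * r)) + η) :=
          mul_le_mul_of_nonneg_left (hQub _ hx) (Real.exp_pos _).le
      _ = Real.exp (-t * r) * ramp A b (Real.exp (-t * r)) + η * Real.exp (-t * r) := by ring
      _ ≤ 1 + η * Real.exp (-t * r) := by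
          have := ramp_mul_le_one hA0 (d := b) hx.1
          linarith
  have hg_nonneg : ∀ r : ℝ, 0 ≤ r → 0 ≤ g r := fun r hr =>
    mul_nonneg (Real.exp_pos _).le (hQ0 _ (hxmem r hr))
  have hg_tail : ∀ r : ℝ, (1 + δ) * s ≤ r → g r ≤ η * Real.exp (-t * r) := by
    intro r hr
    have hr0 : 0 ≤ r := le_trans (by positivity) hr
    have hx := hxmem r hr0
    have hxA : Real.exp (-t * r) ≤ A := by
      rw [hAdef]
      apply Real.exp_le_exp.2
      have h1 : t * ((1 + δ) * s) ≤ t * r := mul_le_mul_of_nonneg_left hr ht0.le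
      have h2 : t * ((1 + δ) * s) = 1 + δ := by
        rw [htdef]; field_simp
      linarith
    have hub := hQub _ hx
    rw [ramp_eq_zero hAb hxA] at hub
    calc g r ≤ Real.exp (-t * r) * (0 + η) :=
          mul_le_mul_of_nonneg_left hub (Real.exp_pos _).le
      _ = η * Real.exp (-t * r) := by ring
  have hg'_ge : ∀ r ∈ Icc 0 ((1 - δ) * s), 1 - η ≤ g' r := by
    intro r hr
    have hx := hxmem r hr.1
    have hxb' : b' ≤ Real.exp (-t * r) := by
      rw [hb'def]
      apply Real.exp_le_exp.2
      have h1 : t * r ≤ t * ((1 - δ) * s) := mul_le_mul_of_nonneg_left hr.2 ht0.le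
      have h2 : t * ((1 - δ) * s) = 1 - δ := by
        rw [htdef]; field_simp
      linarith
    have h3 := (abs_le.1 (hQ'c _ hx)).1
    have h4 : Real.exp (-t * r) * ramp b b' (Real.exp (-t * r)) = 1 :=
      ramp_mul_eq_one hb0 hbb' hxb'
    have h5 : Real.exp (-t * r) * (ramp b b' (Real.exp (-t * r)) - η) ≤ g' r := by
      apply mul_le_mul_of_nonneg_left _ (Real.exp_pos _).le
      linarith
    calc 1 - η ≤ 1 - η * Real.exp (-t * r) := by
          have hh : η * Real.exp (-t * r) ≤ η * 1 := mul_le_mul_of_nonneg_left hx.2 hη0.le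
          linarith
      _ = Real.exp (-t * r) * (ramp b b' (Real.exp (-t * r)) - η) := by
          rw [mul_sub, h4]; ring
      _ ≤ g' r := h5
  have hg'_le : ∀ r : ℝ, 0 ≤ r → g' r ≤ 1 + η * Real.exp (-t * r) := by
    intro r hr
    have hx := hxmem r hr
    have h3 := (abs_le.1 (hQ'c _ hx)).2
    calc g' r ≤ Real.exp (-t * r) * (ramp b b' (Real.exp (-t * r)) + η) :=
          mul_le_mul_of_nonneg_left (by linarith) (Real.exp_pos _).le
      _ = Real.exp (-t * r) * ramp b b' (Real.exp (-t * r)) + η * Real.exp (-t * r) := by ring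
      _ ≤ 1 + η * Real.exp (-t * r) := by
          have := ramp_mul_le_one hb0 (d := b') hx.1
          linarith
  have hg'_nonneg : ∀ r : ℝ, 0 ≤ r → 0 ≤ g' r := fun r hr =>
    mul_nonneg (Real.exp_pos _).le (hQ'0 _ (hxmem r hr))
  have hg'_tail : ∀ r : ℝ, s ≤ r → g' r ≤ η * Real.exp (-t * r) := by
    intro r hr
    have hr0 : 0 ≤ r := le_trans hs0.le hr
    have hx := hxmem r hr0
    have hxb : Real.exp (-t * r) ≤ b := by
      rw [hbdef]
      apply Real.exp_le_exp.2
      have h1 : t * s ≤ t * r := mul_le_mul_of_nonneg_left hr ht0.le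
      rw [hts] at h1
      linarith
    have h3 := (abs_le.1 (hQ'c _ hx)).2
    rw [ramp_eq_zero hbb' hxb] at h3
    calc g' r ≤ Real.exp (-t * r) * (0 + η) :=
          mul_le_mul_of_nonneg_left (by linarith) (Real.exp_pos _).le
      _ = η * Real.exp (-t * r) := by ring
  set B : ℝ := β (C₁ * s⁻¹) with hBdef
  have hB0 : 0 ≤ B := hβnn _ (by positivity)
  have hΛ0 : 0 ≤ L * ν s := mul_nonneg hL.le (hν0 s)
  have hBΛ0 : 0 ≤ B * (L * ν s) := mul_nonneg hB0 hΛ0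
  -- comparison of the two integrals of g
  have hterm : ∀ k : ℕ, (k:ℝ) + 1 ≤ C₁ → |Iμ (((k:ℝ)+1) * t) - Iν (((k:ℝ)+1) * t)| ≤ B * (L * ν s) := by
    intro k hkc
    obtain ⟨_, _, hIνk, hdiffk⟩ := key _ (hukpos k) (huk1 k hkc)
    refine hdiffk.trans ?_
    have h1 : β (((k:ℝ)+1) * t) ≤ B := by
      rw [hBdef]
      refine hβmono (mem_Ici.2 (hukpos k).le) (mem_Ici.2 (by positivity)) ?_
      rw [htdef]
      exact mul_le_mul_of_nonneg_right hkc (inv_nonneg.2 hs0.le)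
    have h2 : Iν (((k:ℝ)+1) * t) ≤ L * ν s := by
      refine hIνk.trans ?_
      refine mul_le_mul_of_nonneg_left (hν ?_) hL.le
      rw [mul_inv, htdef, inv_inv]
      have hk1 : (1:ℝ) ≤ (k:ℝ) + 1 := by
        have : (0:ℝ) ≤ (k:ℝ) := Nat.cast_nonneg k
        linarith
      calc ((k:ℝ)+1)⁻¹ * s ≤ 1 * s := by
            refine mul_le_mul_of_nonneg_right ?_ hs0.le
            exact inv_le_one_of_one_le₀ hk1
        _ = s := one_mul s
    exact mul_le_mul h1 h2 (hIν0 _) hB0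
  have hcompQ : |(∫ r, g r ∂π) - (∫ r, g r ∂ρ)| ≤ S * (B * (L * ν s)) := by
    rw [hgdef, hSdef, hNdef]
    rw [integral_poly_exp Q hintπQ, integral_poly_exp Q hintρQ]
    exact abs_sum_mul_le _ _ _ _ (fun k hk => hterm k (hkC k hk hNC))
  have hcompQ' : |(∫ r, g' r ∂π) - (∫ r, g' r ∂ρ)| ≤ S' * (B * (L * ν s)) := by
    rw [hg'def, hS'def, hN'def]
    rw [integral_poly_exp Q' hintπQ', integral_poly_exp Q' hintρQ']
    exact abs_sum_mul_le _ _ _ _ (fun k hk => hterm k (hkC k hk hN'C))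
  -- measure-theoretic facts
  have hρIic : ∀ x : ℝ, ρ (Iic x) = ENNReal.ofReal (hν.stieltjesFunction x) :=
    sf_measure_Iic hν hνneg
  have hπIic : ∀ x : ℝ, π (Iic x) = ENNReal.ofReal (hμ.stieltjesFunction x) :=
    sf_measure_Iic hμ hμneg
  have hρIicfin : ∀ x : ℝ, ρ (Iic x) ≠ ⊤ := fun x => by
    rw [hρIic]; exact ENNReal.ofReal_ne_top
  have hπIicfin : ∀ x : ℝ, π (Iic x) ≠ ⊤ := fun x => by
    rw [hπIic]; exact ENNReal.ofReal_ne_top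
  have hρneg : ρ (Iio 0) = 0 := sf_measure_neg hν hνneg
  have hπneg : π (Iio 0) = 0 := sf_measure_neg hμ hμneg
  have hIicIcc : ∀ (m : Measure ℝ), m (Iio 0) = 0 → ∀ x : ℝ, m (Iic x) = m (Icc 0 x) := by
    intro m hm x
    refine le_antisymm ?_ (measure_mono Icc_subset_Iic_self)
    calc m (Iic x) ≤ m (Iio 0 ∪ Icc 0 x) := by
          refine measure_mono fun y hy => ?_
          rcases lt_or_ge y 0 with h | h
          · exact Or.inl (mem_Iio.2 h)
          · exact Or.inr ⟨h, hy⟩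
      _ ≤ m (Iio 0) + m (Icc 0 x) := measure_union_le _ _
      _ = m (Icc 0 x) := by rw [hm, zero_add]
  have hFν_nonneg : ∀ x : ℝ, 0 ≤ hν.stieltjesFunction x := fun x => by
    rw [hν.stieltjesFunction_eq]
    exact le_trans (hν0 x) (hν.le_rightLim le_rfl)
  have hFμ_nonneg : ∀ x : ℝ, 0 ≤ hμ.stieltjesFunction x := fun x => by
    rw [hμ.stieltjesFunction_eq]
    exact le_trans (hμ0 x) (hμ.le_rightLim le_rfl)
  -- upper chain
  have hu12 : μ s ≤ ∫ r, g r ∂π := by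
    have h1 : μ s ≤ (π (Iic s)).toReal := by
      rw [hπIic, ENNReal.toReal_ofReal (hFμ_nonneg s), hμ.stieltjesFunction_eq]
      exact hμ.le_rightLim le_rfl
    have h2 : (π (Iic s)).toReal ≤ ∫ r in Icc 0 s, g r ∂π := by
      rw [hIicIcc π hπneg s]
      have hconst : ∫ r in Icc (0:ℝ) s, (1:ℝ) ∂π = (π (Icc 0 s)).toReal := by
        rw [setIntegral_const, measureReal_def, smul_eq_mul, mul_one]
      rw [← hconst]
      refine setIntegral_mono_on ?_ hgπ.integrableOn measurableSet_Icc hg_ge_one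
      refine integrableOn_const (LT.lt.ne ?_)
      exact lt_of_le_of_lt (measure_mono Icc_subset_Iic_self)
        (lt_top_iff_ne_top.2 (hπIicfin s))
    have h3 : ∫ r in Icc 0 s, g r ∂π ≤ ∫ r, g r ∂π :=
      setIntegral_le_integral hgπ (by filter_upwards [hμae] with r hr using hg_nonneg r hr)
    linarith only [h1, h2, h3]
  have hu3 : ∫ r, g r ∂π ≤ (∫ r, g r ∂ρ) + S * (B * (L * ν s)) := by
    have h := (abs_sub_le_iff.1 hcompQ).1
    linarith only [h]
  have hu4 : ∫ r, g r ∂ρ = (∫ r in Iic ((1+δ)*s), g r ∂ρ) + ∫ r in Ioi ((1+δ)*s), g r ∂ρ := by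
    rw [← compl_Iic]
    exact (integral_add_compl measurableSet_Iic hgρ).symm
  have hu5 : ∫ r in Iic ((1+δ)*s), g r ∂ρ ≤ (ρ (Iic ((1+δ)*s))).toReal + η * Iν t := by
    have hb1 : ∫ r in Iic ((1+δ)*s), g r ∂ρ
        ≤ ∫ r in Iic ((1+δ)*s), (1 + η * Real.exp (-t * r)) ∂ρ := by
      refine integral_mono_ae hgρ.integrableOn
        ((integrableOn_const (lt_top_iff_ne_top.2 (hρIicfin _)).ne).add
          (hρt.const_mul η).integrableOn) ?_
      exact ae_restrict_of_ae (by filter_upwards [hνae] with r hr using hg_le r hr)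
    have hb2 : ∫ r in Iic ((1+δ)*s), (1 + η * Real.exp (-t * r)) ∂ρ
        = (ρ (Iic ((1+δ)*s))).toReal + η * ∫ r in Iic ((1+δ)*s), Real.exp (-t * r) ∂ρ := by
      rw [integral_add (integrableOn_const (lt_top_iff_ne_top.2 (hρIicfin _)).ne :
          IntegrableOn (fun _ => (1:ℝ)) _ ρ)
        (hρt.const_mul η).integrableOn]
      rw [setIntegral_const, measureReal_def, smul_eq_mul, mul_one, integral_const_mul]
    have hb3 : ∫ r in Iic ((1+δ)*s), Real.exp (-t * r) ∂ρ ≤ Iν t :=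
      setIntegral_le_integral hρt (Eventually.of_forall fun r => (Real.exp_pos _).le)
    have hb4 := mul_le_mul_of_nonneg_left hb3 hη0.le
    linarith only [hb1, hb2, hb4]
  have hFνR : (ρ (Iic ((1+δ)*s))).toReal ≤ ν s + ε * ν s := by
    rw [hρIic, ENNReal.toReal_ofReal (hFν_nonneg _)]
    have h1 : hν.stieltjesFunction ((1+δ)*s) ≤ ν ((1 + 3 * σ / 4) * s) := by
      rw [hν.stieltjesFunction_eq]
      refine hν.rightLim_le ?_
      refine mul_lt_mul_of_pos_right ?_ hs0
      rw [hδdef]; linarith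
    have h2 := hii (1 + 3 * σ / 4) s
      (by rw [show (1 + 3 * σ / 4) - 1 = 3 * σ / 4 by ring, abs_of_nonneg (by linarith)]
          linarith) hsl
    have h3 := (abs_sub_le_iff.1 h2).1
    linarith only [h1, h3]
  have hu7 : ∫ r in Ioi ((1+δ)*s), g r ∂ρ ≤ η * Iν t := by
    have hb1 : ∫ r in Ioi ((1+δ)*s), g r ∂ρ ≤ ∫ r in Ioi ((1+δ)*s), η * Real.exp (-t * r) ∂ρ := by
      refine integral_mono_ae hgρ.integrableOn (hρt.const_mul η).integrableOn ?_
      filter_upwards [ae_restrict_mem measurableSet_Ioi] with r hr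
      exact hg_tail r (le_of_lt hr)
    have hb3 : ∫ r in Ioi ((1+δ)*s), Real.exp (-t * r) ∂ρ ≤ Iν t :=
      setIntegral_le_integral hρt (Eventually.of_forall fun r => (Real.exp_pos _).le)
    have hb4 := mul_le_mul_of_nonneg_left hb3 hη0.le
    rw [integral_const_mul] at hb1
    linarith only [hb1, hb4]
  have hηIν : η * Iν t ≤ η * (L * ν s) := mul_le_mul_of_nonneg_left hIνts hη0.le
  have hSC : S * (B * (L * ν s)) ≤ C₁ * (B * (L * ν s)) := by
    refine mul_le_mul_of_nonneg_right ?_ hBΛ0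
    rw [hC₁def]; linarith
  have h2ηε : 2 * (η * (L * ν s)) ≤ ε * (L * ν s) := by
    rw [hηdef]
    linarith only [mul_nonneg hε0.le hΛ0]
  have hupper : μ s - ν s ≤ ε * ν s + ε * (L * ν s) + C₁ * (B * (L * ν s)) := by
    rw [hu4] at hu3
    linarith only [hu12, hu3, hu5, hu7, hFνR, hηIν, hSC, h2ηε]
  -- lower chain
  have hl1 : ν s ≤ ν ((1 - δ) * s) + ε * ν s := by
    have h2 := hii (1 - δ) s
      (by rw [show (1 - δ) - 1 = -δ by ring, abs_neg, abs_of_nonneg hδ0.le]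
          rw [hδdef]; linarith) hsl
    have h3 := (abs_sub_le_iff.1 h2).2
    linarith only [h3]
  have hl2 : ν ((1 - δ) * s) ≤ (ρ (Icc 0 ((1 - δ) * s))).toReal := by
    rw [← hIicIcc ρ hρneg, hρIic, ENNReal.toReal_ofReal (hFν_nonneg _),
      hν.stieltjesFunction_eq]
    exact hν.le_rightLim le_rfl
  have hmfin : ρ (Icc 0 ((1 - δ) * s)) < ⊤ :=
    lt_of_le_of_lt (measure_mono Icc_subset_Iic_self) (lt_top_iff_ne_top.2 (hρIicfin _))
  have hl3 : (ρ (Icc 0 ((1 - δ) * s))).toReal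
      ≤ (∫ r in Icc 0 ((1 - δ) * s), g' r ∂ρ) + η * (ρ (Icc 0 ((1 - δ) * s))).toReal := by
    have hconst : ∫ r in Icc (0:ℝ) ((1 - δ) * s), (1 - η) ∂ρ
        = (ρ (Icc 0 ((1 - δ) * s))).toReal * (1 - η) := by
      rw [setIntegral_const, measureReal_def, smul_eq_mul]
    have hmono := setIntegral_mono_on (integrableOn_const hmfin.ne)
      hg'ρ.integrableOn measurableSet_Icc hg'_ge
    rw [hconst] at hmono
    linarith only [hmono]
  have hl4 : (ρ (Icc 0 ((1 - δ) * s))).toReal ≤ 3 * (L * ν s) := by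
    have hE : ∀ r ∈ Icc (0:ℝ) ((1 - δ) * s), Real.exp (-1) ≤ Real.exp (-t * r) := by
      intro r hr
      apply Real.exp_le_exp.2
      have hr2 : r ≤ s := by
        have hds : (1 - δ) * s ≤ 1 * s :=
          mul_le_mul_of_nonneg_right (by linarith only [hδ0]) hs0.le
        rw [one_mul] at hds
        exact le_trans hr.2 hds
      have h1 : t * r ≤ t * s := mul_le_mul_of_nonneg_left hr2 ht0.le
      rw [hts] at h1
      linarith
    have hconst : ∫ r in Icc (0:ℝ) ((1 - δ) * s), Real.exp (-1) ∂ρ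
        = (ρ (Icc 0 ((1 - δ) * s))).toReal * Real.exp (-1) := by
      rw [setIntegral_const, measureReal_def, smul_eq_mul]
    have hmono := setIntegral_mono_on (integrableOn_const hmfin.ne)
      hρt.integrableOn measurableSet_Icc hE
    rw [hconst] at hmono
    have hle : (ρ (Icc 0 ((1 - δ) * s))).toReal * Real.exp (-1) ≤ L * ν s :=
      le_trans hmono (le_trans (setIntegral_le_integral hρt
        (Eventually.of_forall fun r => (Real.exp_pos _).le)) hIνts)
    have hexp1 : Real.exp (-1) * Real.exp 1 = 1 := by
      rw [← Real.exp_add]; norm_num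
    have h3 : Real.exp 1 ≤ 3 := le_of_lt (lt_trans Real.exp_one_lt_d9 (by norm_num))
    have h4 : (ρ (Icc 0 ((1 - δ) * s))).toReal * Real.exp (-1) * Real.exp 1
        ≤ (L * ν s) * Real.exp 1 := mul_le_mul_of_nonneg_right hle (Real.exp_pos 1).le
    rw [mul_assoc, hexp1, mul_one] at h4
    have h5 : (L * ν s) * Real.exp 1 ≤ (L * ν s) * 3 := mul_le_mul_of_nonneg_left h3 hΛ0
    linarith only [h4, h5]
  have hl5 : ∫ r in Icc 0 ((1 - δ) * s), g' r ∂ρ ≤ ∫ r, g' r ∂ρ :=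
    setIntegral_le_integral hg'ρ (by filter_upwards [hνae] with r hr using hg'_nonneg r hr)
  have hl6 : ∫ r, g' r ∂ρ ≤ (∫ r, g' r ∂π) + S' * (B * (L * ν s)) := by
    have h := (abs_sub_le_iff.1 hcompQ').2
    linarith only [h]
  have hl7 : ∫ r, g' r ∂π = (∫ r in Iio s, g' r ∂π) + ∫ r in Ici s, g' r ∂π := by
    rw [← compl_Iio]
    exact (integral_add_compl measurableSet_Iio hg'π).symm
  have hπIiofin : π (Iio s) < ⊤ :=
    lt_of_le_of_lt (measure_mono Iio_subset_Iic_self) (lt_top_iff_ne_top.2 (hπIicfin s))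
  have hl8 : ∫ r in Iio s, g' r ∂π ≤ (π (Iio s)).toReal + η * Iμ t := by
    have hb1 : ∫ r in Iio s, g' r ∂π ≤ ∫ r in Iio s, (1 + η * Real.exp (-t * r)) ∂π := by
      refine integral_mono_ae hg'π.integrableOn
        ((integrableOn_const hπIiofin.ne).add (hπt.const_mul η).integrableOn) ?_
      exact ae_restrict_of_ae (by filter_upwards [hμae] with r hr using hg'_le r hr)
    have hb2 : ∫ r in Iio s, (1 + η * Real.exp (-t * r)) ∂π
        = (π (Iio s)).toReal + η * ∫ r in Iio s, Real.exp (-t * r) ∂π := by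
      rw [integral_add (integrableOn_const hπIiofin.ne : IntegrableOn (fun _ => (1:ℝ)) _ π) (hπt.const_mul η).integrableOn]
      rw [setIntegral_const, measureReal_def, smul_eq_mul, mul_one, integral_const_mul]
    have hb3 : ∫ r in Iio s, Real.exp (-t * r) ∂π ≤ Iμ t :=
      setIntegral_le_integral hπt (Eventually.of_forall fun r => (Real.exp_pos _).le)
    have hb4 := mul_le_mul_of_nonneg_left hb3 hη0.le
    linarith only [hb1, hb2, hb4]
  have hl9 : (π (Iio s)).toReal ≤ μ s :=
    ENNReal.toReal_le_of_le_ofReal (hμ0 s) (sf_measure_Iio_le hμ hμneg s)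
  have hl10 : ∫ r in Ici s, g' r ∂π ≤ η * Iμ t := by
    have hb1 : ∫ r in Ici s, g' r ∂π ≤ ∫ r in Ici s, η * Real.exp (-t * r) ∂π := by
      refine integral_mono_ae hg'π.integrableOn (hπt.const_mul η).integrableOn ?_
      filter_upwards [ae_restrict_mem measurableSet_Ici] with r hr
      exact hg'_tail r hr
    have hb3 : ∫ r in Ici s, Real.exp (-t * r) ∂π ≤ Iμ t :=
      setIntegral_le_integral hπt (Eventually.of_forall fun r => (Real.exp_pos _).le)
    have hb4 := mul_le_mul_of_nonneg_left hb3 hη0.le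
    rw [integral_const_mul] at hb1
    linarith only [hb1, hb4]
  have hl11 : Iμ t ≤ (L * ν s) + B * (L * ν s) := by
    have h1 := (abs_sub_le_iff.1 hdifft).1
    have h2 : β t ≤ B := by
      rw [hBdef]
      refine hβmono (mem_Ici.2 ht0.le) (mem_Ici.2 (by positivity)) ?_
      rw [htdef]
      exact le_mul_of_one_le_left (inv_nonneg.2 hs0.le) hC₁.le
    have h3 : β t * Iν t ≤ B * (L * ν s) := mul_le_mul h2 hIνts (hIν0 t) hB0
    linarith only [h1, h3, hIνts]
  have hηIμ : η * Iμ t ≤ η * ((L * ν s) + B * (L * ν s)) :=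
    mul_le_mul_of_nonneg_left hl11 hη0.le
  have hηl4 : η * (ρ (Icc 0 ((1 - δ) * s))).toReal ≤ η * (3 * (L * ν s)) :=
    mul_le_mul_of_nonneg_left hl4 hη0.le
  have h5ηε : 5 * (η * (L * ν s)) ≤ ε * (L * ν s) := by
    rw [hηdef]
    linarith only [mul_nonneg hε0.le hΛ0]
  have hS'C : (2 * η) * (B * (L * ν s)) + S' * (B * (L * ν s)) ≤ C₁ * (B * (L * ν s)) := by
    have h1 : (2 * η) * (B * (L * ν s)) ≤ 2 * (B * (L * ν s)) := by
      refine mul_le_mul_of_nonneg_right ?_ hBΛ0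
      linarith only [hη1, hη0]
    have h2 : 2 * (B * (L * ν s)) + S' * (B * (L * ν s)) ≤ C₁ * (B * (L * ν s)) := by
      have : (2 + S') ≤ C₁ := by rw [hC₁def]; linarith only [hS0, hN0, hN'0]
      have h3 := mul_le_mul_of_nonneg_right this hBΛ0
      linarith only [h3]
    linarith only [h1, h2]
  have hlower : ν s - μ s ≤ ε * ν s + ε * (L * ν s) + C₁ * (B * (L * ν s)) := by
    rw [hl7] at hl6
    linarith only [hl1, hl2, hl3, hl5, hl6, hl8, hl9, hl10, hηIμ, hηl4, h5ηε, hS'C]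
  have hrhs : (ε + ε * L + C₁ * L * β (C₁ * s⁻¹)) * ν s
      = ε * ν s + ε * (L * ν s) + C₁ * (B * (L * ν s)) := by
    rw [hBdef]; ring
  rw [abs_sub_le_iff, hrhs]
  exact ⟨hupper, hlower⟩
end

section
/- For every α > 0 and ε₀ > 0 there exists a constant L > 0, depending only on α and ε₀, with the following property: for every C ≥ 0, every λ₂ > 0 with λ₂ ≥ (1+ε₀)·C, and every t ∈ (0, λ₂⁻¹], one has ∫ e^{−tr} dν(r) ≤ L · ν(t⁻¹), where ν(r) := ((r − C)₊)^α = (max(r−C,0))^α. -/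
open MeasureTheory Set

/-- The function ν(r) = ((r − C)₊)^α. -/
noncomputable def nuFun (C α : ℝ) : ℝ → ℝ := fun r => (max (r - C) 0) ^ α

lemma nuFun_monotone (C : ℝ) {α : ℝ} (hα : 0 < α) : Monotone (nuFun C α) := by
  intro x y hxy
  exact Real.rpow_le_rpow (le_max_right _ _)
    (max_le_max (by linarith) le_rfl) hα.le

/-- For every `α > 0` and `ε₀ > 0` there is `L > 0`, depending only on `α` and `ε₀`,
such that for all `C ≥ 0`, `λ₂ > 0` with `λ₂ ≥ (1+ε₀)·C`, and `t ∈ (0, λ₂⁻¹]`, the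
Laplace–Stieltjes transform of `ν(r) = ((r−C)₊)^α` at `t` is at most `L · ν(t⁻¹)`. -/
theorem laplace_nuFun_le (α ε₀ : ℝ) (hα : 0 < α) (hε₀ : 0 < ε₀) :
    ∃ L : ℝ, 0 < L ∧
      ∀ C : ℝ, 0 ≤ C → ∀ lam₂ : ℝ, 0 < lam₂ → (1 + ε₀) * C ≤ lam₂ →
        ∀ t ∈ Set.Ioc (0:ℝ) lam₂⁻¹,
          (∫⁻ r, ENNReal.ofReal (Real.exp (-t * r))
              ∂(nuFun_monotone C hα).stieltjesFunction.measure)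
            ≤ ENNReal.ofReal (L * nuFun C α t⁻¹) := by
  classical
  set K : ℝ := (1 + ε₀) / ε₀ with hKdef
  have hK1 : 1 ≤ K := by
    rw [hKdef, le_div_iff₀ hε₀]; linarith
  have hKpos : 0 < K := lt_of_lt_of_le one_pos hK1
  -- Summability of the comparison series
  set n : ℕ := ⌈α⌉₊ with hn
  have hrlt : ‖Real.exp (-1)‖ < 1 := by
    rw [Real.norm_eq_abs, abs_of_pos (Real.exp_pos _)]
    exact Real.exp_lt_one_iff.2 (by norm_num)
  have hsum0 : Summable (fun k : ℕ => (k : ℝ) ^ n * (Real.exp (-1)) ^ k) :=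
    summable_pow_mul_geometric_of_norm_lt_one n hrlt
  have hsum1 : Summable (fun k : ℕ => ((k : ℝ) + 1) ^ n * (Real.exp (-1)) ^ (k + 1)) := by
    have := (summable_nat_add_iff 1).2 hsum0
    refine this.congr fun k => ?_
    push_cast
    ring
  set g : ℕ → ℝ := fun k => Real.exp (-(k : ℝ)) * (((k : ℝ) + 1) * K) ^ α with hg
  have hg_nonneg : ∀ k, 0 ≤ g k := by
    intro k
    have : (0:ℝ) ≤ ((k : ℝ) + 1) * K := mul_nonneg (by positivity) hKpos.le
    exact mul_nonneg (Real.exp_pos _).le (Real.rpow_nonneg this _)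
  have hgle : ∀ k, g k ≤ (K ^ α * Real.exp 1) * (((k : ℝ) + 1) ^ n * (Real.exp (-1)) ^ (k + 1)) := by
    intro k
    have hk1 : (1 : ℝ) ≤ (k : ℝ) + 1 := le_add_of_nonneg_left (Nat.cast_nonneg k)
    have h1 : (((k : ℝ) + 1) * K) ^ α = ((k : ℝ) + 1) ^ α * K ^ α :=
      Real.mul_rpow (by positivity) hKpos.le
    have h2 : ((k : ℝ) + 1) ^ α ≤ ((k : ℝ) + 1) ^ n := by
      rw [← Real.rpow_natCast ((k : ℝ) + 1) n]
      exact Real.rpow_le_rpow_of_exponent_le hk1 (Nat.le_ceil α)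
    have h3 : Real.exp (-(k : ℝ)) = Real.exp 1 * (Real.exp (-1)) ^ (k + 1) := by
      rw [← Real.exp_nat_mul, ← Real.exp_add]
      congr 1
      push_cast
      ring
    rw [hg]
    simp only
    rw [h1, h3]
    have hKα : (0 : ℝ) ≤ K ^ α := Real.rpow_nonneg hKpos.le _
    have hexp : (0 : ℝ) ≤ Real.exp 1 * (Real.exp (-1)) ^ (k + 1) := by positivity
    calc Real.exp 1 * (Real.exp (-1)) ^ (k + 1) * (((k : ℝ) + 1) ^ α * K ^ α)
        ≤ Real.exp 1 * (Real.exp (-1)) ^ (k + 1) * (((k : ℝ) + 1) ^ n * K ^ α) := by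
          apply mul_le_mul_of_nonneg_left _ hexp
          exact mul_le_mul_of_nonneg_right h2 hKα
      _ = (K ^ α * Real.exp 1) * (((k : ℝ) + 1) ^ n * (Real.exp (-1)) ^ (k + 1)) := by ring
  have hsumg : Summable g :=
    Summable.of_nonneg_of_le hg_nonneg hgle (hsum1.mul_left _)
  set S : ℝ := ∑' k, g k with hS
  have hS_nonneg : 0 ≤ S := tsum_nonneg hg_nonneg
  refine ⟨S + 1, by linarith, ?_⟩
  intro C hC lam₂ hlam hlamC t ht
  obtain ⟨ht0, htl⟩ := ht
  set μ := (nuFun_monotone C hα).stieltjesFunction.measure with hμ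
  -- basic inequalities
  have htinv : 0 < t⁻¹ := inv_pos.2 ht0
  have h1 : lam₂ ≤ t⁻¹ := by
    have := inv_anti₀ ht0 htl
    rwa [inv_inv] at this
  have hC1 : (1 + ε₀) * C ≤ t⁻¹ := le_trans hlamC h1
  have hCt : C ≤ t⁻¹ := by nlinarith
  have hgap : t⁻¹ ≤ K * (t⁻¹ - C) := by
    rw [hKdef, div_mul_eq_mul_div, le_div_iff₀ hε₀]
    nlinarith
  have hgap0 : 0 ≤ t⁻¹ - C := by linarith
  have hνt : nuFun C α t⁻¹ = (t⁻¹ - C) ^ α := by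
    unfold nuFun
    rw [max_eq_left hgap0]
  have hν_nonneg : 0 ≤ (t⁻¹ - C) ^ α := Real.rpow_nonneg hgap0 _
  -- the Stieltjes function is nuFun itself
  have hcont : Continuous (nuFun C α) := by
    unfold nuFun
    exact (Real.continuous_rpow_const hα.le).comp
      ((continuous_id.sub continuous_const).max continuous_const)
  have hF : ∀ x, (nuFun_monotone C hα).stieltjesFunction x = nuFun C α x := by
    intro x
    rw [Monotone.stieltjesFunction_eq]
    exact rightLim_eq_of_tendsto
      ((hcont.tendsto x).mono_left nhdsWithin_le_nhds)
  have hzeroC : ∀ r ≤ C, nuFun C α r = 0 := by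
    intro r hr
    unfold nuFun
    rw [max_eq_right (by linarith), Real.zero_rpow hα.ne']
  have hbot : Filter.Tendsto ((nuFun_monotone C hα).stieltjesFunction : ℝ → ℝ)
      Filter.atBot (nhds 0) := by
    apply Filter.Tendsto.congr' _ tendsto_const_nhds
    filter_upwards [Filter.eventually_le_atBot C] with r hr
    rw [hF r, hzeroC r hr]
  have hIic : ∀ x, μ (Iic x) = ENNReal.ofReal (nuFun C α x) := by
    intro x
    rw [hμ, StieltjesFunction.measure_Iic _ hbot, hF, sub_zero]
  have hμIic0 : μ (Iic (0:ℝ)) = 0 := by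
    have h2 : μ (Iic C) = 0 := by
      rw [hIic, hzeroC C le_rfl, ENNReal.ofReal_zero]
    exact le_antisymm (le_trans (measure_mono (Iic_subset_Iic.2 hC)) h2.le) zero_le
  -- per-interval bound
  have hkey : ∀ k : ℕ,
      (∫⁻ r in Ioc ((k : ℝ) / t) (((k : ℝ) + 1) / t), ENNReal.ofReal (Real.exp (-t * r)) ∂μ)
        ≤ ENNReal.ofReal (g k) * ENNReal.ofReal ((t⁻¹ - C) ^ α) := by
    intro k
    have hstep1 : (∫⁻ r in Ioc ((k : ℝ) / t) (((k : ℝ) + 1) / t),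
        ENNReal.ofReal (Real.exp (-t * r)) ∂μ)
        ≤ ENNReal.ofReal (Real.exp (-(k : ℝ))) * μ (Ioc ((k : ℝ) / t) (((k : ℝ) + 1) / t)) := by
      rw [← setLIntegral_const]
      refine setLIntegral_mono measurable_const fun x hx => ?_
      apply ENNReal.ofReal_le_ofReal
      apply Real.exp_le_exp.2
      have : (k : ℝ) < x * t := (div_lt_iff₀ ht0).1 hx.1
      nlinarith
    have hstep2 : μ (Ioc ((k : ℝ) / t) (((k : ℝ) + 1) / t))
        ≤ ENNReal.ofReal (nuFun C α (((k : ℝ) + 1) / t)) := by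
      rw [← hIic]
      exact measure_mono Ioc_subset_Iic_self
    have hstep3 : nuFun C α (((k : ℝ) + 1) / t) ≤ (((k : ℝ) + 1) * K) ^ α * (t⁻¹ - C) ^ α := by
      have hkK : (0 : ℝ) ≤ ((k : ℝ) + 1) * K * (t⁻¹ - C) :=
        mul_nonneg (mul_nonneg (by positivity) hKpos.le) hgap0
      have hub : ((k : ℝ) + 1) / t - C ≤ ((k : ℝ) + 1) * K * (t⁻¹ - C) := by
        have h4 : ((k : ℝ) + 1) / t = ((k : ℝ) + 1) * t⁻¹ := by ring
        have h5 : ((k : ℝ) + 1) * t⁻¹ ≤ ((k : ℝ) + 1) * (K * (t⁻¹ - C)) :=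
          mul_le_mul_of_nonneg_left hgap (by positivity)
        rw [h4]
        nlinarith
      calc nuFun C α (((k : ℝ) + 1) / t)
          ≤ (((k : ℝ) + 1) * K * (t⁻¹ - C)) ^ α := by
            unfold nuFun
            exact Real.rpow_le_rpow (le_max_right _ _) (max_le hub hkK) hα.le
        _ = (((k : ℝ) + 1) * K) ^ α * (t⁻¹ - C) ^ α := Real.mul_rpow (by positivity) hgap0
    calc (∫⁻ r in Ioc ((k : ℝ) / t) (((k : ℝ) + 1) / t), ENNReal.ofReal (Real.exp (-t * r)) ∂μ)
        ≤ ENNReal.ofReal (Real.exp (-(k : ℝ))) * μ (Ioc ((k : ℝ) / t) (((k : ℝ) + 1) / t)) :=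
          hstep1
      _ ≤ ENNReal.ofReal (Real.exp (-(k : ℝ)))
            * ENNReal.ofReal ((((k : ℝ) + 1) * K) ^ α * (t⁻¹ - C) ^ α) := by
          exact mul_le_mul_right (hstep2.trans (ENNReal.ofReal_le_ofReal hstep3)) _
      _ = ENNReal.ofReal (g k) * ENNReal.ofReal ((t⁻¹ - C) ^ α) := by
          rw [hg]
          simp only
          rw [← ENNReal.ofReal_mul (Real.exp_pos _).le,
            ← ENNReal.ofReal_mul (mul_nonneg (Real.exp_pos _).le
              (Real.rpow_nonneg (mul_nonneg (by positivity) hKpos.le) _)), ← mul_assoc]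
  -- covering of Ioi 0
  have hcover : Ioi (0:ℝ) ⊆ ⋃ k : ℕ, Ioc ((k : ℝ) / t) (((k : ℝ) + 1) / t) := by
    intro x hx
    have hxt : 0 < x * t := mul_pos hx ht0
    refine mem_iUnion.2 ⟨⌈x * t⌉₊ - 1, ?_, ?_⟩
    · have hceil : 1 ≤ ⌈x * t⌉₊ := Nat.one_le_ceil_iff.2 hxt
      have : ((⌈x * t⌉₊ - 1 : ℕ) : ℝ) = (⌈x * t⌉₊ : ℝ) - 1 := by
        push_cast [hceil]; ring
      rw [div_lt_iff₀ ht0, this]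
      have := Nat.ceil_lt_add_one hxt.le
      linarith
    · have hceil : 1 ≤ ⌈x * t⌉₊ := Nat.one_le_ceil_iff.2 hxt
      have hcast : ((⌈x * t⌉₊ - 1 : ℕ) : ℝ) + 1 = (⌈x * t⌉₊ : ℝ) := by
        push_cast [hceil]; ring
      rw [le_div_iff₀ ht0, hcast]
      exact Nat.le_ceil _
  -- put everything together
  calc (∫⁻ r, ENNReal.ofReal (Real.exp (-t * r)) ∂μ)
      = (∫⁻ r in Iic (0:ℝ), ENNReal.ofReal (Real.exp (-t * r)) ∂μ)
        + (∫⁻ r in (Iic (0:ℝ))ᶜ, ENNReal.ofReal (Real.exp (-t * r)) ∂μ) :=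
        (lintegral_add_compl _ measurableSet_Iic).symm
    _ = (∫⁻ r in Ioi (0:ℝ), ENNReal.ofReal (Real.exp (-t * r)) ∂μ) := by
        rw [setLIntegral_measure_zero _ _ hμIic0, zero_add, compl_Iic]
    _ ≤ (∫⁻ r in ⋃ k : ℕ, Ioc ((k : ℝ) / t) (((k : ℝ) + 1) / t),
          ENNReal.ofReal (Real.exp (-t * r)) ∂μ) := lintegral_mono_set hcover
    _ ≤ ∑' k : ℕ, (∫⁻ r in Ioc ((k : ℝ) / t) (((k : ℝ) + 1) / t),
          ENNReal.ofReal (Real.exp (-t * r)) ∂μ) := lintegral_iUnion_le _ _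
    _ ≤ ∑' k : ℕ, ENNReal.ofReal (g k) * ENNReal.ofReal ((t⁻¹ - C) ^ α) :=
        ENNReal.tsum_le_tsum hkey
    _ = (∑' k : ℕ, ENNReal.ofReal (g k)) * ENNReal.ofReal ((t⁻¹ - C) ^ α) :=
        ENNReal.tsum_mul_right
    _ = ENNReal.ofReal S * ENNReal.ofReal ((t⁻¹ - C) ^ α) := by
        rw [ENNReal.ofReal_tsum_of_nonneg hg_nonneg hsumg]
    _ ≤ ENNReal.ofReal (S + 1) * ENNReal.ofReal ((t⁻¹ - C) ^ α) :=
        mul_le_mul_left (ENNReal.ofReal_le_ofReal (by linarith)) _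
    _ = ENNReal.ofReal ((S + 1) * nuFun C α t⁻¹) := by
        rw [hνt, ENNReal.ofReal_mul (by linarith)]
end

section
/- Let (M, 𝔪) be a measure space, n ≥ 1 an integer, and V : M → ℝ a measurable function. Let λ ∈ ℝ, let a > 0 satisfy 2·σ(λ − a) ≥ σ(λ + a), and let δ ∈ (0, 1]. Then a^{n/2} · 𝔪(Ω_{λ+δa} \ Ω_{λ−δa}) ≤ 2 · ∫_{Ω_{λ−a}} ((λ − V(x))₊)^{n/2} d𝔪(x). -/
open MeasureTheory Set

/-- If `a > 0` satisfies `2·σ(λ−a) ≥ σ(λ+a)` (where `σ(μ) = 𝔪{V < μ}`), then for any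
`δ ∈ (0,1]`, `a^{n/2} · 𝔪(Ω_{λ+δa} \ Ω_{λ−δa}) ≤ 2·∫_{Ω_{λ−a}} ((λ−V)₊)^{n/2} d𝔪`. -/
theorem measure_annulus_le {M : Type*} [MeasurableSpace M] (𝔪 : Measure M)
    (n : ℕ) (hn : 1 ≤ n) (V : M → ℝ) (hV : Measurable V)
    (lam a δ : ℝ) (ha : 0 < a)
    (hdoub : 𝔪 {x | V x < lam + a} ≤ 2 * 𝔪 {x | V x < lam - a})
    (hδ : δ ∈ Set.Ioc (0:ℝ) 1) :
    ENNReal.ofReal (a ^ ((n : ℝ) / 2))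
        * 𝔪 ({x | V x < lam + δ * a} \ {x | V x < lam - δ * a})
      ≤ 2 * ∫⁻ x in {x | V x < lam - a},
            ENNReal.ofReal ((max (lam - V x) 0) ^ ((n : ℝ) / 2)) ∂𝔪 := by
  set s : Set M := {x | V x < lam - a}
  have hs : MeasurableSet s := measurableSet_lt hV measurable_const
  -- annulus measure bound
  have h1 : 𝔪 ({x | V x < lam + δ * a} \ {x | V x < lam - δ * a}) ≤ 2 * 𝔪 s := by
    refine le_trans (measure_mono ?_) hdoub
    refine diff_subset.trans fun x hx => ?_
    have hx' : V x < lam + δ * a := hx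
    have : δ * a ≤ a := by nlinarith [hδ.1, hδ.2]
    show V x < lam + a
    linarith
  -- integrand lower bound on s
  have h2 : ENNReal.ofReal (a ^ ((n : ℝ) / 2)) * 𝔪 s
      ≤ ∫⁻ x in s, ENNReal.ofReal ((max (lam - V x) 0) ^ ((n : ℝ) / 2)) ∂𝔪 := by
    rw [← setLIntegral_const s (ENNReal.ofReal (a ^ ((n : ℝ) / 2)))]
    refine setLIntegral_mono (by measurability) fun x hx => ?_
    have hxa : a < lam - V x := by
      have : V x < lam - a := hx
      linarith
    have hmax : max (lam - V x) 0 = lam - V x := max_eq_left (by linarith)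
    rw [hmax]
    exact ENNReal.ofReal_le_ofReal
      (Real.rpow_le_rpow ha.le hxa.le (by positivity))
  calc ENNReal.ofReal (a ^ ((n : ℝ) / 2))
        * 𝔪 ({x | V x < lam + δ * a} \ {x | V x < lam - δ * a})
      ≤ ENNReal.ofReal (a ^ ((n : ℝ) / 2)) * (2 * 𝔪 s) := by
        exact mul_le_mul_right h1 _
    _ = 2 * (ENNReal.ofReal (a ^ ((n : ℝ) / 2)) * 𝔪 s) := by ring
    _ ≤ _ := mul_le_mul_right h2 2
end

section
/- One-sided approximation by exponential sums: let η : [0,∞) → [0,1] be a continuous function and Λ > 0 a constant such that η(λ) = 0 for all λ ≥ Λ. Then for every ε > 0 there exist an integer k ≥ 1 and real coefficients a₁, …, a_k such that for all λ ≥ 0: e^{λ}·η(λ) ≤ Σ_{l=1}^{k} a_l · e^{−lλ} ≤ e^{λ}·η(λ) + ε. -/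
open Set Finset

/-- One-sided approximation by exponential sums: if `η : [0,∞) → [0,1]` is continuous and
vanishes on `[Λ,∞)`, then for every `ε > 0` there are coefficients `a₁,…,a_k` with
`e^λ·η(λ) ≤ Σ_{l=1}^{k} a_l e^{−lλ} ≤ e^λ·η(λ) + ε` for all `λ ≥ 0`. -/
theorem one_sided_exp_sum_approx (η : ℝ → ℝ) (hcont : ContinuousOn η (Set.Ici 0))
    (hrange : ∀ x, 0 ≤ x → η x ∈ Set.Icc (0:ℝ) 1)
    (Λ : ℝ) (hΛ : 0 < Λ) (hvanish : ∀ x, Λ ≤ x → η x = 0)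
    (ε : ℝ) (hε : 0 < ε) :
    ∃ k : ℕ, 1 ≤ k ∧ ∃ a : ℕ → ℝ,
      ∀ x : ℝ, 0 ≤ x →
        Real.exp x * η x ≤ ∑ l ∈ Finset.Icc 1 k, a l * Real.exp (-(l : ℝ) * x)
        ∧ ∑ l ∈ Finset.Icc 1 k, a l * Real.exp (-(l : ℝ) * x) ≤ Real.exp x * η x + ε := by
  set c := Real.exp (-Λ) with hc
  have hc0 : 0 < c := Real.exp_pos _
  -- the auxiliary function h(t) = η(-log t)/t², cut off below c
  set h : ℝ → ℝ := fun t => if c ≤ t then η (-Real.log t) / t ^ 2 else 0 with hh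
  have hconth : ContinuousOn h (Set.Icc 0 1) := by
    apply ContinuousOn.if
    · intro t ht
      have hfr : frontier {t : ℝ | c ≤ t} = {c} := frontier_Ici
      have htc : t = c := by
        have := ht.2
        rw [show {a : ℝ | c ≤ a} = Set.Ici c from rfl, frontier_Ici] at this
        exact this
      rw [htc]
      have hl : -Real.log c = Λ := by rw [hc, Real.log_exp]; ring
      rw [hl, hvanish Λ le_rfl]
      simp
    · have hsub : Set.Icc (0:ℝ) 1 ∩ closure {a : ℝ | c ≤ a} ⊆ Set.Icc c 1 := by
        rw [show {a : ℝ | c ≤ a} = Set.Ici c from rfl, closure_Ici]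
        rintro t ⟨ht1, ht2⟩
        exact ⟨ht2, ht1.2⟩
      apply ContinuousOn.mono _ hsub
      apply ContinuousOn.div
      · apply hcont.comp
        · apply ContinuousOn.neg
          apply Real.continuousOn_log.mono
          intro t ht
          exact ne_of_gt (lt_of_lt_of_le hc0 ht.1)
        · intro t ht
          simp only [Set.mem_Ici]
          rw [neg_nonneg]
          exact Real.log_nonpos (le_of_lt (lt_of_lt_of_le hc0 ht.1)) ht.2
      · exact (continuous_pow 2).continuousOn
      · intro t ht
        exact pow_ne_zero 2 (ne_of_gt (lt_of_lt_of_le hc0 ht.1))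
    · exact continuousOn_const
  -- Weierstrass approximation of h
  obtain ⟨q, hq⟩ := exists_polynomial_near_of_continuousOn 0 1 h hconth (ε/2) (by linarith)
  -- the coefficients
  refine ⟨q.natDegree + 1, by omega,
    (fun l => q.coeff (l - 1) + if l = 1 then ε/2 else 0), ?_⟩
  intro x hx
  set t := Real.exp (-x) with htdef
  have ht0 : 0 < t := Real.exp_pos _
  have ht1 : t ≤ 1 := Real.exp_le_one_iff.mpr (by linarith)
  -- the sum equals t * q.eval t + (ε/2) * t
  have hsum : ∑ l ∈ Finset.Icc 1 (q.natDegree + 1),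
      (q.coeff (l - 1) + if l = 1 then ε/2 else 0) * Real.exp (-(l : ℝ) * x)
      = t * q.eval t + (ε/2) * t := by
    have hexp : ∀ l : ℕ, Real.exp (-(l : ℝ) * x) = t ^ l := by
      intro l
      rw [htdef, ← Real.exp_nat_mul]
      ring_nf
    have hsplit : ∀ l ∈ Finset.Icc 1 (q.natDegree + 1),
        (q.coeff (l - 1) + if l = 1 then ε/2 else 0) * Real.exp (-(l : ℝ) * x)
        = q.coeff (l-1) * t ^ l + (if l = 1 then ε/2 * t else 0) := by
      intro l hl
      rw [hexp l]
      split_ifs with h1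
      · subst h1; ring_nf
      · ring_nf
    rw [Finset.sum_congr rfl hsplit, Finset.sum_add_distrib]
    have h2 : ∑ l ∈ Finset.Icc 1 (q.natDegree + 1), (if l = 1 then ε/2 * t else 0)
        = ε/2 * t := by
      rw [Finset.sum_ite_eq' (Finset.Icc 1 (q.natDegree + 1)) 1 (fun _ => ε/2 * t)]
      simp
    rw [h2]
    have h3 : ∑ l ∈ Finset.Icc 1 (q.natDegree + 1), q.coeff (l-1) * t ^ l
        = t * q.eval t := by
      rw [Polynomial.eval_eq_sum_range, Finset.mul_sum]
      rw [show Finset.Icc 1 (q.natDegree + 1) = Finset.map ⟨Nat.succ, Nat.succ_injective⟩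
        (Finset.range (q.natDegree + 1)) from ?_]
      · rw [Finset.sum_map]
        apply Finset.sum_congr rfl
        intro j hj
        simp only [Function.Embedding.coeFn_mk]
        rw [Nat.succ_sub_one]
        rw [pow_succ]
        ring
      · ext l
        simp only [Finset.mem_Icc, Finset.mem_map, Finset.mem_range,
          Function.Embedding.coeFn_mk]
        constructor
        · rintro ⟨h1, h2⟩
          exact ⟨l - 1, by omega, by omega⟩
        · rintro ⟨j, hj, rfl⟩
          omega
    rw [h3]
  rw [hsum]
  -- key: exp x * η x = t * h t
  have hkey : Real.exp x * η x = t * h t := by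
    rw [hh]
    by_cases hct : c ≤ t
    · simp only [hct, if_true]
      have hlog : -Real.log t = x := by rw [htdef, Real.log_exp]; ring
      rw [hlog]
      field_simp [htdef]
      have hee : Real.exp x * Real.exp (-x) ^ 2 = Real.exp (-x) := by
        rw [sq, ← Real.exp_add, ← Real.exp_add]; ring_nf
      have hee2 : Real.exp x * t = 1 := by rw [htdef, ← Real.exp_add]; simp
      linear_combination (η x) * hee2
    · simp only [hct, if_false]
      have : Λ ≤ x := by
        by_contra hcon
        push_neg at hcon
        exact hct (Real.exp_le_exp.mpr (by linarith))
      rw [hvanish x this]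
      ring
  have hq' := hq t ⟨le_of_lt ht0, ht1⟩
  rw [abs_sub_lt_iff] at hq'
  constructor
  · rw [hkey]
    nlinarith [hq'.2, ht0]
  · rw [hkey]
    nlinarith [hq'.1, ht0, ht1, hε]
end

section
/- There exists a constant c > 0 such that for all λ ≥ 1, ∫_{1}^{exp(λ²)} (λ − √(ln x))^{1/2} dx ≥ c · e^{λ²} · λ^{−1/2}. -/
open MeasureTheory Set

/-- Lower bound: there is `c > 0` such that for all `λ ≥ 1`,
`∫_{1}^{exp(λ²)} (λ − √(ln x))^{1/2} dx ≥ c · e^{λ²} · λ^{−1/2}`. -/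
theorem integral_sqrt_lower_bound :
    ∃ c : ℝ, 0 < c ∧ ∀ lam : ℝ, 1 ≤ lam →
      c * Real.exp (lam ^ 2) * lam ^ (-(1:ℝ)/2)
        ≤ ∫ x in Set.Icc 1 (Real.exp (lam ^ 2)),
            (lam - Real.sqrt (Real.log x)) ^ ((1:ℝ)/2) := by
  refine ⟨(Real.exp (-(1:ℝ)/2) - Real.exp (-1)) / 2, ?_, ?_⟩
  · have : Real.exp (-1) < Real.exp (-(1:ℝ)/2) := Real.exp_lt_exp.mpr (by norm_num)
    linarith
  intro lam hlam
  have hlam0 : (0:ℝ) < lam := lt_of_lt_of_le one_pos hlam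
  set E := Real.exp (lam ^ 2) with hE
  set a := Real.exp (lam ^ 2 - 1) with ha
  set b := Real.exp (lam ^ 2 - 1/2) with hb
  set f : ℝ → ℝ := fun x => (lam - Real.sqrt (Real.log x)) ^ ((1:ℝ)/2) with hf
  have hone_le_a : (1:ℝ) ≤ a := Real.one_le_exp (by nlinarith)
  have hab : a ≤ b := Real.exp_le_exp.mpr (by linarith)
  have hbE : b ≤ E := Real.exp_le_exp.mpr (by norm_num)
  have hsub : Icc a b ⊆ Icc 1 E := Icc_subset_Icc hone_le_a hbE
  -- continuity / integrability on the big interval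
  have hcont : ContinuousOn f (Icc 1 E) := by
    apply ContinuousOn.rpow_const
    · exact (continuousOn_const.sub ((Real.continuousOn_log.mono
        (fun x hx => by
          have : (1:ℝ) ≤ x := hx.1
          exact ne_of_gt (by linarith))).sqrt))
    · intro x _
      right; norm_num
  have hint : IntegrableOn f (Icc 1 E) := hcont.integrableOn_Icc
  -- nonnegativity on the big interval
  have hnonneg : ∀ x ∈ Icc (1:ℝ) E, 0 ≤ f x := by
    intro x hx
    apply Real.rpow_nonneg
    have hlog : Real.log x ≤ lam ^ 2 := by
      have := Real.log_le_log (by linarith [hx.1] : (0:ℝ) < x) hx.2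
      simpa [hE, Real.log_exp] using this
    have : Real.sqrt (Real.log x) ≤ lam := by
      calc Real.sqrt (Real.log x) ≤ Real.sqrt (lam ^ 2) := Real.sqrt_le_sqrt hlog
        _ = lam := by rw [Real.sqrt_sq hlam0.le]
    linarith
  -- pointwise lower bound on the small interval
  have hpt : ∀ x ∈ Icc a b, (1/2 : ℝ) * lam ^ (-(1:ℝ)/2) ≤ f x := by
    intro x hx
    have hx0 : (0:ℝ) < x := lt_of_lt_of_le one_pos (hone_le_a.trans hx.1)
    have hlogx : Real.log x ≤ lam ^ 2 - 1/2 := by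
      have := Real.log_le_log hx0 hx.2
      simpa [hb, Real.log_exp] using this
    have hsq : Real.sqrt (Real.log x) ≤ lam - 1/(4*lam) := by
      calc Real.sqrt (Real.log x) ≤ Real.sqrt (lam ^ 2 - 1/2) := Real.sqrt_le_sqrt hlogx
        _ ≤ Real.sqrt ((lam - 1/(4*lam)) ^ 2) := by
            apply Real.sqrt_le_sqrt
            have h1 : (0:ℝ) < 16 * lam ^ 2 := by positivity
            have : (lam - 1/(4*lam)) ^ 2 = lam ^ 2 - 1/2 + 1/(16 * lam ^ 2) := by
              field_simp; ring
            rw [this]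
            have hpos : 0 < 1/(16 * lam ^ 2) := by positivity
            linarith
        _ = lam - 1/(4*lam) := by
            apply Real.sqrt_sq
            have h14 : 1/(4*lam) ≤ 1 := by
              rw [div_le_one (by positivity)]; linarith
            linarith
    have hbase : 1/(4*lam) ≤ lam - Real.sqrt (Real.log x) := by linarith
    have hkey : (1/(4*lam)) ^ ((1:ℝ)/2) ≤ f x :=
      Real.rpow_le_rpow (by positivity) hbase (by norm_num)
    have h4 : ((4:ℝ)) ^ ((1:ℝ)/2) = 2 := by
      rw [show (4:ℝ) = 2^(2:ℕ) by norm_num, ← Real.rpow_natCast 2 2,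
        ← Real.rpow_mul (by norm_num)]
      norm_num
    calc (1/2 : ℝ) * lam ^ (-(1:ℝ)/2) = (1/(4*lam)) ^ ((1:ℝ)/2) := by
          rw [show (1/(4*lam) : ℝ) = 4⁻¹ * lam⁻¹ by ring,
            Real.mul_rpow (by norm_num) (by positivity),
            Real.inv_rpow (by norm_num : (0:ℝ) ≤ 4), Real.inv_rpow hlam0.le, h4,
            show (-(1:ℝ)/2) = -((1:ℝ)/2) by ring, Real.rpow_neg hlam0.le]
          norm_num
      _ ≤ f x := hkey
  -- lower bound on the small interval
  have hvol : (volume (Icc a b)).toReal = b - a := by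
    rw [Real.volume_Icc, ENNReal.toReal_ofReal (by linarith)]
  have hsmall : (b - a) * ((1/2 : ℝ) * lam ^ (-(1:ℝ)/2)) ≤ ∫ x in Icc a b, f x := by
    have := setIntegral_mono_on ((integrableOn_const_iff).mpr (Or.inr (by
        rw [Real.volume_Icc]; exact ENNReal.ofReal_lt_top)))
      (hint.mono_set hsub) measurableSet_Icc hpt
    calc (b - a) * ((1/2 : ℝ) * lam ^ (-(1:ℝ)/2))
        = ∫ _ in Icc a b, ((1/2 : ℝ) * lam ^ (-(1:ℝ)/2)) := by
          rw [setIntegral_const, measureReal_def, hvol, smul_eq_mul]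
      _ ≤ ∫ x in Icc a b, f x := this
  have hmono : (∫ x in Icc a b, f x) ≤ ∫ x in Icc 1 E, f x := by
    apply setIntegral_mono_set hint
    · filter_upwards [ae_restrict_mem measurableSet_Icc] with x hx
      exact hnonneg x hx
    · exact HasSubset.Subset.eventuallyLE hsub
  have hba : b - a = E * (Real.exp (-(1:ℝ)/2) - Real.exp (-1)) := by
    rw [hb, ha, hE, mul_sub, ← Real.exp_add, ← Real.exp_add]
    congr 1
    all_goals ring
  have hfinal : (Real.exp (-(1:ℝ)/2) - Real.exp (-1)) / 2 * E * lam ^ (-(1:ℝ)/2)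
      = (b - a) * ((1/2 : ℝ) * lam ^ (-(1:ℝ)/2)) := by
    rw [hba]; ring
  rw [hfinal]
  exact hsmall.trans hmono
end

section
/- For all λ > 0, ∫_{1}^{exp(λ²)} (λ − √(ln x)) dx ≤ 2 · e^{λ²} · λ^{−1}. -/
open MeasureTheory Set

/-- Upper bound: for all `λ > 0`,
`∫_{1}^{exp(λ²)} (λ − √(ln x)) dx ≤ 2 · e^{λ²} · λ⁻¹`. -/
theorem integral_linear_upper_bound (lam : ℝ) (hlam : 0 < lam) :
    ∫ x in Set.Icc 1 (Real.exp (lam ^ 2)), (lam - Real.sqrt (Real.log x))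
      ≤ 2 * Real.exp (lam ^ 2) * lam⁻¹ := by
  set b := Real.exp (lam ^ 2) with hbdef
  have hb1 : (1 : ℝ) ≤ b := by
    rw [hbdef]; exact Real.one_le_exp (by positivity)
  have hb0 : (0 : ℝ) < b := lt_of_lt_of_le one_pos hb1
  have hlogb : Real.log b = lam ^ 2 := Real.log_exp _
  have hcf : ContinuousOn (fun x : ℝ => lam - Real.sqrt (Real.log x)) (Icc 1 b) := by
    apply continuousOn_const.sub
    apply Real.continuous_sqrt.comp_continuousOn
    apply Real.continuousOn_log.mono
    intro x hx
    simp only [Set.mem_compl_iff, Set.mem_singleton_iff]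
    have : (1:ℝ) ≤ x := hx.1
    linarith
  have hcg : ContinuousOn (fun x : ℝ => (lam ^ 2 - Real.log x) / lam) (Icc 1 b) := by
    apply ContinuousOn.div_const
    apply continuousOn_const.sub
    apply Real.continuousOn_log.mono
    intro x hx
    simp only [Set.mem_compl_iff, Set.mem_singleton_iff]
    have : (1:ℝ) ≤ x := hx.1
    linarith
  have hif : IntegrableOn (fun x : ℝ => lam - Real.sqrt (Real.log x)) (Icc 1 b) :=
    hcf.integrableOn_Icc
  have hig : IntegrableOn (fun x : ℝ => (lam ^ 2 - Real.log x) / lam) (Icc 1 b) :=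
    hcg.integrableOn_Icc
  have hmono : ∫ x in Icc 1 b, (lam - Real.sqrt (Real.log x))
      ≤ ∫ x in Icc 1 b, (lam ^ 2 - Real.log x) / lam := by
    apply setIntegral_mono_on hif hig measurableSet_Icc
    intro x hx
    have hx1 : (1:ℝ) ≤ x := hx.1
    have hlog0 : 0 ≤ Real.log x := Real.log_nonneg hx1
    have hlogle : Real.log x ≤ lam ^ 2 := by
      calc Real.log x ≤ Real.log b := Real.log_le_log (by linarith) hx.2
        _ = lam ^ 2 := hlogb
    set s := Real.sqrt (Real.log x) with hs
    have hs0 : 0 ≤ s := Real.sqrt_nonneg _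
    have hs2 : s ^ 2 = Real.log x := Real.sq_sqrt hlog0
    have hsle : s ≤ lam := by
      rw [hs]
      calc Real.sqrt (Real.log x) ≤ Real.sqrt (lam ^ 2) := Real.sqrt_le_sqrt hlogle
        _ = lam := Real.sqrt_sq hlam.le
    rw [le_div_iff₀ hlam, ← hs2]
    nlinarith
  refine hmono.trans ?_
  have hIcc : ∫ x in Icc 1 b, (lam ^ 2 - Real.log x) / lam
      = ∫ x in (1:ℝ)..b, (lam ^ 2 - Real.log x) / lam := by
    rw [intervalIntegral.integral_of_le hb1, integral_Icc_eq_integral_Ioc]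
  have hnot : (0:ℝ) ∉ Set.uIcc (1:ℝ) b := by
    rw [Set.uIcc_of_le hb1]
    intro h
    exact absurd h.1 (by norm_num)
  have hilog : IntervalIntegrable Real.log volume 1 b := intervalIntegral.intervalIntegrable_log hnot
  have hval : ∫ x in (1:ℝ)..b, (lam ^ 2 - Real.log x) / lam
      = (lam ^ 2 * (b - 1) - (b * Real.log b - 1 * Real.log 1 - b + 1)) / lam := by
    rw [intervalIntegral.integral_div, intervalIntegral.integral_sub
      intervalIntegrable_const hilog, intervalIntegral.integral_const,
      integral_log]
    simp only [smul_eq_mul]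
    ring
  rw [hIcc, hval, hlogb, Real.log_one]
  rw [div_le_iff₀ hlam]
  have h1 : lam⁻¹ * lam = 1 := inv_mul_cancel₀ hlam.ne'
  nlinarith [sq_nonneg lam, hb0]
end

section
/- There exists a constant C > 0 such that for all λ ≥ 1, ∫_{1}^{exp(λ²)} (λ − √(ln x)) dx ≤ C · λ^{−1/2} · ∫_{1}^{exp(λ²)} (λ − √(ln x))^{1/2} dx. In particular, ∫_{1}^{exp(λ²)} (λ − √(ln x)) dx = o( ∫_{1}^{exp(λ²)} (λ − √(ln x))^{1/2} dx ) as λ → ∞. -/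
open MeasureTheory Set Filter Asymptotics

private lemma contOn_base (lam X : ℝ) :
    ContinuousOn (fun x : ℝ => lam - Real.sqrt (Real.log x)) (Set.Icc 1 X) := by
  apply ContinuousOn.sub continuousOn_const
  refine Real.continuous_sqrt.comp_continuousOn (Real.continuousOn_log.mono ?_)
  intro x hx
  simp only [Set.mem_compl_iff, Set.mem_singleton_iff]
  intro h0
  rw [h0] at hx
  exact absurd hx.1 (by norm_num)

private lemma sqrtlog_le {lam X x : ℝ} (h0 : 0 ≤ lam) (hX : X = Real.exp (lam ^ 2))
    (hx : x ∈ Set.Icc 1 X) : Real.sqrt (Real.log x) ≤ lam := by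
  have hx1 : (1:ℝ) ≤ x := hx.1
  have hlog : Real.log x ≤ lam ^ 2 := by
    have := Real.log_le_log (by linarith : (0:ℝ) < x) hx.2
    rwa [hX, Real.log_exp] at this
  calc Real.sqrt (Real.log x) ≤ Real.sqrt (lam ^ 2) := Real.sqrt_le_sqrt hlog
    _ = lam := Real.sqrt_sq h0

set_option maxHeartbeats 1000000 in
private lemma key (lam : ℝ) (h : 1 ≤ lam) :
    (∫ x in Set.Icc 1 (Real.exp (lam ^ 2)), (lam - Real.sqrt (Real.log x)))
      ≤ 10 * lam ^ (-(1:ℝ)/2)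
          * ∫ x in Set.Icc 1 (Real.exp (lam ^ 2)),
              (lam - Real.sqrt (Real.log x)) ^ ((1:ℝ)/2) := by
  have hlam0 : (0:ℝ) < lam := by linarith
  set X := Real.exp (lam ^ 2) with hXdef
  set Y := Real.exp (lam ^ 2 - 1/2) with hYdef
  have hX1 : (1:ℝ) ≤ X := Real.one_le_exp (by positivity)
  have hY1 : (1:ℝ) ≤ Y := Real.one_le_exp (by nlinarith)
  have hYX : Y ≤ X := Real.exp_le_exp.2 (by linarith)
  -- integrability
  have hi1 : IntegrableOn (fun x : ℝ => lam - Real.sqrt (Real.log x)) (Set.Icc 1 X) :=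
    (contOn_base lam X).integrableOn_Icc
  have hi2 : IntegrableOn (fun x : ℝ => (lam ^ 2 - Real.log x) / lam) (Set.Icc 1 X) := by
    apply ContinuousOn.integrableOn_Icc
    apply ContinuousOn.div_const
    apply ContinuousOn.sub continuousOn_const
    refine Real.continuousOn_log.mono ?_
    intro x hx
    simp only [Set.mem_compl_iff, Set.mem_singleton_iff]
    intro h0
    rw [h0] at hx
    exact absurd hx.1 (by norm_num)
  have hi3 : IntegrableOn
      (fun x : ℝ => (lam - Real.sqrt (Real.log x)) ^ ((1:ℝ)/2)) (Set.Icc 1 X) :=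
    ((contOn_base lam X).rpow_const (fun x _ => Or.inr (by norm_num))).integrableOn_Icc
  -- Step A: upper bound for the first integral
  have hA : (∫ x in Set.Icc 1 X, (lam - Real.sqrt (Real.log x)))
      ≤ ∫ x in Set.Icc 1 X, (lam ^ 2 - Real.log x) / lam := by
    apply setIntegral_mono_on hi1 hi2 measurableSet_Icc
    intro x hx
    rw [le_div_iff₀ hlam0]
    have h1 := sqrtlog_le hlam0.le hXdef hx
    have h2 : Real.sqrt (Real.log x) ^ 2 = Real.log x :=
      Real.sq_sqrt (Real.log_nonneg hx.1)
    have h3 := Real.sqrt_nonneg (Real.log x)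
    nlinarith
  have hB : (∫ x in Set.Icc 1 X, (lam ^ 2 - Real.log x) / lam) = (X - 1 - lam ^ 2) / lam := by
    rw [MeasureTheory.integral_Icc_eq_integral_Ioc, ← intervalIntegral.integral_of_le hX1]
    have h0 : (0:ℝ) ∉ Set.uIcc 1 X := by
      rw [Set.uIcc_of_le hX1]
      intro hmem
      exact absurd hmem.1 (by norm_num)
    rw [intervalIntegral.integral_div,
      intervalIntegral.integral_sub intervalIntegrable_const (intervalIntegral.intervalIntegrable_log h0),
      intervalIntegral.integral_const, integral_log]
    simp only [smul_eq_mul, Real.log_one, hXdef, Real.log_exp]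
    ring_nf
  have hAB : (∫ x in Set.Icc 1 X, (lam - Real.sqrt (Real.log x))) ≤ X / lam := by
    rw [hB] at hA
    refine hA.trans ?_
    gcongr
    nlinarith [sq_nonneg lam]
  -- Step C: lower bound for the second integral
  have hrp : ∀ a : ℝ, a ^ ((1:ℝ)/2) = Real.sqrt a := fun a => (Real.sqrt_eq_rpow a).symm
  have hC1 : ∀ x ∈ Set.Icc (1:ℝ) Y, 1/(4*lam) ≤ lam - Real.sqrt (Real.log x) := by
    intro x hx
    have hx1 : (1:ℝ) ≤ x := hx.1
    have hlog : Real.log x ≤ lam ^ 2 - 1/2 := by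
      have := Real.log_le_log (by linarith : (0:ℝ) < x) hx.2
      rwa [hYdef, Real.log_exp] at this
    have hpos : 0 ≤ lam - 1/(4*lam) := by
      have : 1/(4*lam) ≤ 1/4 := by
        apply div_le_div_of_nonneg_left <;> nlinarith
      linarith
    have hsq : (lam - 1/(4*lam))^2 = lam^2 - 1/2 + 1/(16*lam^2) := by
      field_simp
      ring
    have hs : Real.sqrt (Real.log x) ≤ lam - 1/(4*lam) := by
      refine Real.sqrt_le_iff.mpr ⟨hpos, ?_⟩
      rw [hsq]
      have h16 : 0 < 1/(16*lam^2) := by positivity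
      linarith
    linarith
  -- constant lower bound on Icc 1 Y
  set c : ℝ := (1/(4*lam)) ^ ((1:ℝ)/2) with hcdef
  have hC2 : (Y - 1) * c ≤ ∫ x in Set.Icc (1:ℝ) Y,
      (lam - Real.sqrt (Real.log x)) ^ ((1:ℝ)/2) := by
    have hmono := setIntegral_mono_on
      (f := fun _ : ℝ => c)
      (g := fun x : ℝ => (lam - Real.sqrt (Real.log x)) ^ ((1:ℝ)/2))
      (s := Set.Icc (1:ℝ) Y) (μ := volume)
      ((integrableOn_const_iff (by finiteness)).mpr (Or.inr (by rw [Real.volume_Icc]; exact ENNReal.ofReal_lt_top)))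
      (hi3.mono_set (Set.Icc_subset_Icc_right hYX))
      measurableSet_Icc
      (fun x hx => Real.rpow_le_rpow (by positivity) (hC1 x hx) (by norm_num))
    rwa [setIntegral_const, Real.volume_real_Icc, max_eq_left (by linarith),
      smul_eq_mul] at hmono
  have hC3 : (∫ x in Set.Icc (1:ℝ) Y, (lam - Real.sqrt (Real.log x)) ^ ((1:ℝ)/2))
      ≤ ∫ x in Set.Icc (1:ℝ) X, (lam - Real.sqrt (Real.log x)) ^ ((1:ℝ)/2) := by
    apply setIntegral_mono_set hi3
    · filter_upwards with x
      rw [hrp]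
      exact Real.sqrt_nonneg _
    · exact HasSubset.Subset.eventuallyLE (Set.Icc_subset_Icc_right hYX)
  -- arithmetic
  set s : ℝ := Real.sqrt lam with hsdef
  have hs2 : s ^ 2 = lam := Real.sq_sqrt hlam0.le
  have hs1 : 1 ≤ s := by nlinarith [Real.sqrt_nonneg lam]
  have hpow : lam ^ (-(1:ℝ)/2) = 1/s := by
    rw [show (-(1:ℝ)/2) = -(1/2) by norm_num, Real.rpow_neg hlam0.le,
      ← Real.sqrt_eq_rpow, one_div]
  have hc : c = 1/(2*s) := by
    rw [hcdef, ← Real.sqrt_eq_rpow,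
      show 1/(4*lam) = (1/(2*s))^2 by rw [div_pow, one_pow, mul_pow, hs2]; norm_num,
      Real.sqrt_sq (by positivity)]
  -- numerical bound: X ≤ 5 * (Y - 1)
  have hXY : Y = X / Real.exp (1/2) := by
    rw [hYdef, hXdef, Real.exp_sub]
  have hX5 : X ≤ 5 * (Y - 1) := by
    set a : ℝ := Real.exp (1/2) with hadef
    have ha2 : a ^ 2 = Real.exp 1 := by rw [hadef, sq, ← Real.exp_add]; norm_num
    have hagt : (0:ℝ) < a := Real.exp_pos _
    have he1 := Real.exp_one_gt_d9
    have he2 := Real.exp_one_lt_d9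
    have haub : a ≤ 1.649 := by nlinarith
    have hXe : (2.71:ℝ) ≤ X := by
      have : Real.exp 1 ≤ X := Real.exp_le_exp.2 (by nlinarith)
      linarith
    have hX0 : (0:ℝ) ≤ X := by linarith
    have hdiv : X + 5 ≤ 5 * X / a := by
      rw [le_div_iff₀ hagt]
      nlinarith [mul_le_mul_of_nonneg_left haub hX0]
    have h5Xa : 5 * X / a = 5 * (X / a) := by ring
    rw [hXY]
    linarith [hdiv, h5Xa]
  -- put everything together
  have hs0 : s ≠ 0 := by nlinarith
  calc (∫ x in Set.Icc 1 X, (lam - Real.sqrt (Real.log x)))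
      ≤ X / lam := hAB
    _ ≤ 5 * (Y - 1) / lam := by
        gcongr
    _ = 10 * lam ^ (-(1:ℝ)/2) * ((Y - 1) * c) := by
        rw [hpow, hc, ← hs2]
        field_simp
        ring
    _ ≤ 10 * lam ^ (-(1:ℝ)/2)
          * ∫ x in Set.Icc 1 X, (lam - Real.sqrt (Real.log x)) ^ ((1:ℝ)/2) :=
        mul_le_mul_of_nonneg_left (hC2.trans hC3)
          (mul_nonneg (by norm_num) (Real.rpow_nonneg hlam0.le _))

/-- Comparison: there is `C > 0` such that for all `λ ≥ 1`,
`∫_{1}^{exp(λ²)} (λ − √(ln x)) dx ≤ C·λ^{−1/2}·∫_{1}^{exp(λ²)} (λ − √(ln x))^{1/2} dx`;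
in particular the first integral is `o` of the second as `λ → ∞`. -/
theorem integral_comparison_littleO :
    (∃ C : ℝ, 0 < C ∧ ∀ lam : ℝ, 1 ≤ lam →
      (∫ x in Set.Icc 1 (Real.exp (lam ^ 2)), (lam - Real.sqrt (Real.log x)))
        ≤ C * lam ^ (-(1:ℝ)/2)
            * ∫ x in Set.Icc 1 (Real.exp (lam ^ 2)),
                (lam - Real.sqrt (Real.log x)) ^ ((1:ℝ)/2))
    ∧ (fun lam : ℝ =>
          ∫ x in Set.Icc 1 (Real.exp (lam ^ 2)), (lam - Real.sqrt (Real.log x)))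
        =o[atTop]
        (fun lam : ℝ =>
          ∫ x in Set.Icc 1 (Real.exp (lam ^ 2)),
            (lam - Real.sqrt (Real.log x)) ^ ((1:ℝ)/2)) := by
  have hnn1 : ∀ lam : ℝ, 1 ≤ lam →
      0 ≤ ∫ x in Set.Icc 1 (Real.exp (lam ^ 2)), (lam - Real.sqrt (Real.log x)) := by
    intro lam hlam
    apply setIntegral_nonneg measurableSet_Icc
    intro x hx
    have := sqrtlog_le (by linarith : (0:ℝ) ≤ lam) rfl hx
    linarith
  have hnn2 : ∀ lam : ℝ,
      0 ≤ ∫ x in Set.Icc 1 (Real.exp (lam ^ 2)),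
        (lam - Real.sqrt (Real.log x)) ^ ((1:ℝ)/2) := by
    intro lam
    apply setIntegral_nonneg measurableSet_Icc
    intro x _
    rw [← Real.sqrt_eq_rpow]
    exact Real.sqrt_nonneg _
  refine ⟨⟨10, by norm_num, key⟩, ?_⟩
  rw [Asymptotics.isLittleO_iff]
  intro ε hε
  filter_upwards [eventually_ge_atTop (max 1 ((10/ε)^2))] with lam hlam
  have h1 : 1 ≤ lam := le_trans (le_max_left _ _) hlam
  have h2 : (10/ε)^2 ≤ lam := le_trans (le_max_right _ _) hlam
  have hsl : 10/ε ≤ Real.sqrt lam := by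
    calc 10/ε = Real.sqrt ((10/ε)^2) := (Real.sqrt_sq (by positivity)).symm
      _ ≤ Real.sqrt lam := Real.sqrt_le_sqrt h2
  have hslpos : 0 < Real.sqrt lam := lt_of_lt_of_le (by positivity) hsl
  have hcoef : 10 * lam ^ (-(1:ℝ)/2) ≤ ε := by
    have hpow : lam ^ (-(1:ℝ)/2) = (Real.sqrt lam)⁻¹ := by
      rw [show (-(1:ℝ)/2) = -(1/2) by norm_num, Real.rpow_neg (by linarith),
        ← Real.sqrt_eq_rpow]
    rw [hpow]
    rw [show (10:ℝ) * (Real.sqrt lam)⁻¹ = 10 / Real.sqrt lam by ring,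
      div_le_iff₀ hslpos]
    rw [div_le_iff₀ hε] at hsl
    linarith [mul_le_mul_of_nonneg_left hsl (le_of_lt hε)]
  have hkey := key lam h1
  have hI2 := hnn2 lam
  rw [Real.norm_eq_abs, Real.norm_eq_abs, abs_of_nonneg (hnn1 lam h1),
    abs_of_nonneg hI2]
  calc (∫ x in Set.Icc 1 (Real.exp (lam ^ 2)), (lam - Real.sqrt (Real.log x)))
      ≤ 10 * lam ^ (-(1:ℝ)/2)
          * ∫ x in Set.Icc 1 (Real.exp (lam ^ 2)),
              (lam - Real.sqrt (Real.log x)) ^ ((1:ℝ)/2) := hkey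
    _ ≤ ε * ∫ x in Set.Icc 1 (Real.exp (lam ^ 2)),
              (lam - Real.sqrt (Real.log x)) ^ ((1:ℝ)/2) :=
        mul_le_mul_of_nonneg_right hcoef hI2
end

section
/- There exist constants c > 0 and λ₀ ≥ 1 such that for all λ ≥ λ₀, ∫_{0}^{λ²} (λ − √r)^{3/2} · (sinh r)² dr ≥ c · e^{2λ²} · λ^{−3/2}. (Via polar coordinates on three-dimensional hyperbolic space ℍ³, the left-hand side multiplied by 4π equals ∫_{ℍ³} ((λ − V)₊)^{3/2} dvol for the potential V(x) = √(d(x,0)), since (λ−√r)₊ = λ−√r for 0 ≤ r ≤ λ² and vanishes for r ≥ λ².) -/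
open MeasureTheory Set

/-- Lower bound on the classical phase-space volume on hyperbolic 3-space
for the potential `V(x) = √(d(x,0))`: there are `c > 0` and `λ₀ ≥ 1` such that
for all `λ ≥ λ₀`, `∫₀^{λ²} (λ − √r)^{3/2} (sinh r)² dr ≥ c · e^{2λ²} · λ^{−3/2}`. -/
theorem hyperbolic_phase_space_lower_bound :
    ∃ c : ℝ, 0 < c ∧ ∃ lam₀ : ℝ, 1 ≤ lam₀ ∧ ∀ lam : ℝ, lam₀ ≤ lam →
      c * Real.exp (2 * lam ^ 2) * lam ^ (-(3:ℝ)/2)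
        ≤ ∫ r in Set.Icc 0 (lam ^ 2),
            (lam - Real.sqrt r) ^ ((3:ℝ)/2) * (Real.sinh r) ^ 2 := by
  refine ⟨Real.exp (-2) / 256, by positivity, 2, by norm_num, fun lam hlam => ?_⟩
  have hlam0 : (0:ℝ) < lam := by linarith
  set f : ℝ → ℝ := fun r => (lam - Real.sqrt r) ^ ((3:ℝ)/2) * (Real.sinh r) ^ 2 with hf
  have hcont : Continuous f := by
    apply Continuous.mul
    · exact (continuous_const.sub Real.continuous_sqrt).rpow_const
        (fun x => Or.inr (by norm_num))
    · exact Real.continuous_sinh.pow 2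
  have hsub : Icc (lam^2 - 1) (lam^2 - 1/2) ⊆ Icc 0 (lam^2) := by
    apply Icc_subset_Icc <;> nlinarith
  have hmono : ∫ r in Icc (lam^2-1) (lam^2-1/2), f r ≤ ∫ r in Icc 0 (lam^2), f r := by
    apply setIntegral_mono_set hcont.integrableOn_Icc
    · filter_upwards [ae_restrict_mem measurableSet_Icc] with r hr
      have h1 : Real.sqrt r ≤ lam := by
        rw [← Real.sqrt_sq hlam0.le]; exact Real.sqrt_le_sqrt hr.2
      exact mul_nonneg (Real.rpow_nonneg (by linarith) _) (sq_nonneg _)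
    · exact HasSubset.Subset.eventuallyLE hsub
  set K : ℝ := (1/(4*lam)) ^ ((3:ℝ)/2) * (Real.exp (2*lam^2 - 2) / 16) with hK
  have hKbound : ∀ r ∈ Icc (lam^2-1) (lam^2-1/2), K ≤ f r := by
    intro r hr
    obtain ⟨hr1, hr2⟩ := hr
    have hr3 : (3:ℝ) ≤ r := by nlinarith
    set a : ℝ := 1/(4*lam) with ha
    have hamul : a * lam = 1/4 := by rw [ha]; field_simp
    have hapos : 0 < a := by positivity
    have ha8 : a ≤ 1/8 := by
      rw [ha]; exact one_div_le_one_div_of_le (by norm_num) (by linarith)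
    have hsq : Real.sqrt r ≤ lam - a := by
      have h1 : r ≤ (lam - a)^2 := by nlinarith [sq_nonneg a]
      calc Real.sqrt r ≤ Real.sqrt ((lam - a)^2) := Real.sqrt_le_sqrt h1
        _ = lam - a := Real.sqrt_sq (by linarith)
    have hfac1 : a ^ ((3:ℝ)/2) ≤ (lam - Real.sqrt r) ^ ((3:ℝ)/2) :=
      Real.rpow_le_rpow hapos.le (by linarith) (by norm_num)
    -- sinh bound
    have hexp : (2:ℝ) ≤ Real.exp r := by
      have := Real.add_one_le_exp r; linarith
    have hexpneg : Real.exp (-r) ≤ 1 := by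
      rw [Real.exp_le_one_iff]; linarith
    have hsinh : Real.exp r / 4 ≤ Real.sinh r := by
      rw [Real.sinh_eq]; linarith
    have hfac2 : Real.exp (2*lam^2 - 2) / 16 ≤ (Real.sinh r) ^ 2 := by
      have h1 : (Real.exp r / 4)^2 ≤ (Real.sinh r)^2 :=
        pow_le_pow_left₀ (by positivity) hsinh 2
      have h2 : Real.exp (2*lam^2 - 2) ≤ Real.exp (2*r) :=
        Real.exp_le_exp.mpr (by linarith)
      have h3 : (Real.exp r / 4)^2 = Real.exp (2*r) / 16 := by
        rw [div_pow, sq, ← Real.exp_add]; ring_nf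
      nlinarith
    calc K = a ^ ((3:ℝ)/2) * (Real.exp (2*lam^2 - 2) / 16) := by rw [hK]
      _ ≤ (lam - Real.sqrt r) ^ ((3:ℝ)/2) * (Real.sinh r)^2 := by
          apply mul_le_mul hfac1 hfac2 (by positivity)
            (Real.rpow_nonneg (by linarith [Real.sqrt_nonneg r]) _)
      _ = f r := rfl
  have hconstint : ∫ r in Icc (lam^2-1) (lam^2-1/2), (fun _ => K) r = K * (1/2) := by
    rw [setIntegral_const, Real.volume_real_Icc_of_le (by linarith),
      smul_eq_mul]
    ring
  have hint2 : K * (1/2) ≤ ∫ r in Icc (lam^2-1) (lam^2-1/2), f r := by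
    rw [← hconstint]
    apply setIntegral_mono_on
    · exact integrableOn_const measure_Icc_lt_top.ne
    · exact hcont.integrableOn_Icc
    · exact measurableSet_Icc
    · exact hKbound
  -- final algebra
  have h4 : (4:ℝ) ^ ((3:ℝ)/2) = 8 := by
    rw [show ((3:ℝ)/2) = (3:ℝ) * (1/2) by norm_num, Real.rpow_mul (by norm_num),
      show (3:ℝ) = ((3:ℕ):ℝ) by norm_num, Real.rpow_natCast,
      show ((4:ℝ)^(3:ℕ)) = 8^2 by norm_num, ← Real.sqrt_eq_rpow, Real.sqrt_sq (by norm_num)]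
  have hfinal : Real.exp (-2)/256 * Real.exp (2*lam^2) * lam ^ (-(3:ℝ)/2) = K * (1/2) := by
    rw [hK, show (1/(4*lam)) = (4:ℝ)⁻¹ * lam⁻¹ by rw [one_div, mul_inv],
      Real.mul_rpow (by norm_num) (by positivity), Real.inv_rpow (by norm_num),
      Real.inv_rpow hlam0.le, h4,
      show -(3:ℝ)/2 = -((3:ℝ)/2) by ring, Real.rpow_neg hlam0.le,
      show 2*lam^2 - 2 = 2*lam^2 + (-2) by ring, Real.exp_add]
    ring
  calc Real.exp (-2)/256 * Real.exp (2*lam^2) * lam ^ (-(3:ℝ)/2) = K * (1/2) := hfinal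
    _ ≤ ∫ r in Icc (lam^2-1) (lam^2-1/2), f r := hint2
    _ ≤ ∫ r in Icc 0 (lam^2), f r := hmono
end
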